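/- arXiv:1110.0581 — 6 statements merged into one kernel-verified Lean document; each statement's English description precedes it below -/
import Mathlib

section
/- Let $\{A_i\}_{i\ge 1}$ and $\{B_i\}_{i\ge 1}$ be two sequences of events adapted to a filtration $\{\mathcal{F}_i\}$ such that for some positive constants $p, a, \delta$ one has $\mathbb{P}(A_{i+1} \mid \mathcal{F}_i) \ge p$ almost surely on the event $B_i$, and $\mathbb{P}(B_i^c) \le a e^{-\delta i}$ for all $i$. Let $S_n = \sum_{i=1}^n \mathbf{1}_{A_i}$. Then there exists $\varepsilon > 0$ such that $\liminf_{n\to\infty} S_n/n \ge \varepsilon$ almost surely. -/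
open MeasureTheory Filter Set

theorem slln_aux_mart {Ω : Type*} {m0 : MeasurableSpace Ω} (μ : Measure Ω) [IsProbabilityMeasure μ]
    (ℱ : Filtration ℕ m0) (d : ℕ → Ω → ℝ)
    (hmeas : ∀ i, StronglyMeasurable[ℱ (i+1)] (d i))
    (hbd : ∀ i, ∀ᵐ ω ∂μ, |d i ω| ≤ 1)
    (hcondd : ∀ i, μ[d i | ℱ i] =ᵐ[μ] 0) :
    ∀ᵐ ω ∂μ, Filter.Tendsto (fun n : ℕ => (∑ i ∈ Finset.range n, d i ω) / n) atTop (nhds 0) := by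
  set M : ℕ → Ω → ℝ := fun n ω => ∑ i ∈ Finset.range n, d i ω with hM
  -- measurability
  have hM_sm : ∀ n, StronglyMeasurable[ℱ n] (M n) := by
    intro n
    apply Finset.stronglyMeasurable_fun_sum
    intro i hi
    exact (hmeas i).mono (ℱ.mono (Finset.mem_range.mp hi))
  -- integrability helper
  have hInt : ∀ (F : Ω → ℝ) (C : ℝ), AEStronglyMeasurable F μ → (∀ᵐ ω ∂μ, |F ω| ≤ C) →
      Integrable F μ := by
    intro F C hm hb
    exact (integrable_const C).mono' hm (by simpa [Real.norm_eq_abs] using hb)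
  have hd_int : ∀ i, Integrable (d i) μ := fun i =>
    hInt (d i) 1 ((hmeas i).mono (ℱ.le _)).aestronglyMeasurable (hbd i)
  have hM_bd : ∀ n, ∀ᵐ ω ∂μ, |M n ω| ≤ n := by
    intro n
    filter_upwards [ae_all_iff.2 hbd] with ω hω
    calc |M n ω| ≤ ∑ i ∈ Finset.range n, |d i ω| := Finset.abs_sum_le_sum_abs _ _
      _ ≤ ∑ i ∈ Finset.range n, 1 := Finset.sum_le_sum fun i _ => hω i
      _ = n := by simp
  have hM_int : ∀ n (k : ℕ), Integrable (fun ω => M n ω ^ k) μ := by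
    intro n k
    refine hInt _ ((n : ℝ) ^ k) (((hM_sm n).mono (ℱ.le n)).pow k).aestronglyMeasurable ?_
    filter_upwards [hM_bd n] with ω hω
    calc |M n ω ^ k| = |M n ω| ^ k := by rw [abs_pow]
      _ ≤ (n : ℝ) ^ k := pow_le_pow_left₀ (abs_nonneg _) hω k
  -- the orthogonality property
  have hzero : ∀ n (φ : Ω → ℝ) (C : ℝ), StronglyMeasurable[ℱ n] φ → (∀ᵐ ω ∂μ, |φ ω| ≤ C) →
      ∫ ω, φ ω * d n ω ∂μ = 0 := by
    intro n φ C hφ hφC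
    have hφ0 : AEStronglyMeasurable φ μ := (hφ.mono (ℱ.le n)).aestronglyMeasurable
    have hφd : Integrable (φ * d n) μ := by
      refine hInt _ C (hφ0.mul ((hmeas n).mono (ℱ.le _)).aestronglyMeasurable) ?_
      filter_upwards [hφC, hbd n] with ω h1 h2
      calc |(φ * d n) ω| = |φ ω| * |d n ω| := abs_mul _ _
        _ ≤ C * 1 := mul_le_mul h1 h2 (abs_nonneg _) ((abs_nonneg _).trans h1)
        _ = C := mul_one C
    have h1 : μ[φ * d n | ℱ n] =ᵐ[μ] 0 := by
      refine (condExp_mul_of_stronglyMeasurable_left hφ hφd (hd_int n)).trans ?_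
      filter_upwards [hcondd n] with ω hω
      simp [hω]
    calc ∫ ω, φ ω * d n ω ∂μ = ∫ ω, (μ[φ * d n | ℱ n]) ω ∂μ := (integral_condExp (ℱ.le n)).symm
      _ = ∫ _ω, (0 : ℝ) ∂μ := integral_congr_ae h1
      _ = 0 := integral_zero _ _
  -- second moments
  have key2 : ∀ n, ∫ ω, M n ω ^ 2 ∂μ ≤ n := by
    intro n
    induction n with
    | zero => simp [hM]
    | succ n ih =>
      have hexp : ∀ ω, M (n+1) ω ^ 2 = M n ω ^ 2 + (2 * M n ω) * d n ω + d n ω ^ 2 := by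
        intro ω
        simp only [hM, Finset.sum_range_succ]
        ring
      have hcross : Integrable (fun ω => (2 * M n ω) * d n ω) μ := by
        refine hInt _ (2 * n) ((((hM_sm n).mono (ℱ.le n)).const_mul 2).mul
          ((hmeas n).mono (ℱ.le _))).aestronglyMeasurable ?_
        filter_upwards [hM_bd n, hbd n] with ω h1 h2
        calc |2 * M n ω * d n ω| = (2 * |M n ω|) * |d n ω| := by
              rw [abs_mul, abs_mul]; simp [abs_of_nonneg]
          _ ≤ (2 * n) * 1 := mul_le_mul (by linarith) h2 (abs_nonneg _)
              (by positivity)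
          _ = 2 * n := mul_one _
      have hd2 : Integrable (fun ω => d n ω ^ 2) μ := by
        refine hInt _ 1 ((((hmeas n).mono (ℱ.le _)).pow 2)).aestronglyMeasurable ?_
        filter_upwards [hbd n] with ω hω
        calc |d n ω ^ 2| = |d n ω| ^ 2 := by rw [abs_pow]
          _ ≤ 1 := by nlinarith [abs_nonneg (d n ω)]
      have hab : Integrable (fun ω => M n ω ^ 2 + 2 * M n ω * d n ω) μ :=
        (hM_int n 2).add hcross
      have hsplit : ∫ ω, M (n+1) ω ^ 2 ∂μ
          = ∫ ω, M n ω ^ 2 ∂μ + ∫ ω, (2 * M n ω) * d n ω ∂μ + ∫ ω, d n ω ^ 2 ∂μ := by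
        rw [integral_congr_ae (Eventually.of_forall hexp), integral_add hab hd2,
          integral_add (hM_int n 2) hcross]
      have hc0 : ∫ ω, (2 * M n ω) * d n ω ∂μ = 0 :=
        hzero n (fun ω => 2 * M n ω) (2 * n) ((hM_sm n).const_mul 2)
          (by filter_upwards [hM_bd n] with ω h1;
              calc |2 * M n ω| = 2 * |M n ω| := by rw [abs_mul]; simp
                _ ≤ 2 * n := by linarith)
      have hd2le : ∫ ω, d n ω ^ 2 ∂μ ≤ 1 := by
        calc ∫ ω, d n ω ^ 2 ∂μ ≤ ∫ _ω, (1 : ℝ) ∂μ := by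
              refine integral_mono_ae hd2 (integrable_const 1) ?_
              filter_upwards [hbd n] with ω hω
              nlinarith [abs_nonneg (d n ω), abs_le.mp hω]
          _ = 1 := by simp
      rw [hsplit, hc0]
      push_cast
      linarith
  -- fourth moments
  have key4 : ∀ n, ∫ ω, M n ω ^ 4 ∂μ ≤ 4 * (n : ℝ) ^ 2 := by
    intro n
    induction n with
    | zero => simp [hM]
    | succ n ih =>
      set R : Ω → ℝ := fun ω => 6 * M n ω ^ 2 * d n ω ^ 2 + 4 * M n ω * d n ω ^ 3 + d n ω ^ 4
        with hR
      have hexp : ∀ ω, M (n+1) ω ^ 4 = M n ω ^ 4 + (4 * M n ω ^ 3) * d n ω + R ω := by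
        intro ω
        simp only [hM, hR, Finset.sum_range_succ]
        ring
      have hMsm : AEStronglyMeasurable (M n) μ := ((hM_sm n).mono (ℱ.le n)).aestronglyMeasurable
      have hdsm : AEStronglyMeasurable (d n) μ := ((hmeas n).mono (ℱ.le _)).aestronglyMeasurable
      have hcross : Integrable (fun ω => (4 * M n ω ^ 3) * d n ω) μ := by
        refine hInt _ (4 * (n:ℝ)^3) ((((hMsm.pow 3).const_mul 4).mul hdsm)) ?_
        filter_upwards [hM_bd n, hbd n] with ω h1 h2
        have h3 : |M n ω| ^ 3 ≤ (n:ℝ)^3 := pow_le_pow_left₀ (abs_nonneg _) h1 3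
        calc |4 * M n ω ^ 3 * d n ω| = 4 * |M n ω| ^ 3 * |d n ω| := by
              rw [abs_mul, abs_mul, abs_pow]; simp [abs_of_nonneg]
          _ ≤ 4 * (n:ℝ)^3 * 1 := by
              have h4 : (0:ℝ) ≤ 4 * |M n ω| ^ 3 := by positivity
              exact mul_le_mul (by linarith) h2 (abs_nonneg _) (by positivity)
          _ = 4 * (n:ℝ)^3 := mul_one _
      have hR_int : Integrable R μ := by
        refine hInt _ (6 * (n:ℝ)^2 + 4 * n + 1)
          (by exact ((((hMsm.pow 2).const_mul 6).mul (hdsm.pow 2)).add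
            (((hMsm.const_mul 4).mul (hdsm.pow 3)))).add (hdsm.pow 4)) ?_
        filter_upwards [hM_bd n, hbd n] with ω h1 h2
        have ha : (0:ℝ) ≤ |M n ω| := abs_nonneg _
        have hb : (0:ℝ) ≤ |d n ω| := abs_nonneg _
        have ha2 : |M n ω|^2 ≤ (n:ℝ)^2 := pow_le_pow_left₀ ha h1 2
        have hb2 : |d n ω|^2 ≤ 1 := by nlinarith
        have hb3 : |d n ω|^3 ≤ 1 := by nlinarith
        have hb4 : |d n ω|^4 ≤ 1 := by nlinarith
        have e1 : |R ω| ≤ 6 * |M n ω|^2 * |d n ω|^2 + 4 * |M n ω| * |d n ω|^3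
            + |d n ω|^4 := by
          simp only [hR]
          calc |6 * M n ω ^ 2 * d n ω ^ 2 + 4 * M n ω * d n ω ^ 3 + d n ω ^ 4|
              ≤ |6 * M n ω ^ 2 * d n ω ^ 2 + 4 * M n ω * d n ω ^ 3| + |d n ω ^ 4| := abs_add_le _ _
            _ ≤ |6 * M n ω ^ 2 * d n ω ^ 2| + |4 * M n ω * d n ω ^ 3| + |d n ω ^ 4| := by
                linarith [abs_add_le (6 * M n ω ^ 2 * d n ω ^ 2) (4 * M n ω * d n ω ^ 3)]
            _ = 6 * |M n ω|^2 * |d n ω|^2 + 4 * |M n ω| * |d n ω|^3 + |d n ω|^4 := by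
                rw [abs_mul, abs_mul, abs_mul, abs_mul, abs_pow, abs_pow, abs_pow, abs_pow]
                simp [abs_of_nonneg]
        have c1 : 6 * |M n ω|^2 * |d n ω|^2 ≤ 6 * (n:ℝ)^2 := by nlinarith
        have c2 : 4 * |M n ω| * |d n ω|^3 ≤ 4 * n := by nlinarith
        linarith
      have hR_le : ∫ ω, R ω ∂μ ≤ 8 * (n:ℝ) + 3 := by
        have hpt : ∀ᵐ ω ∂μ, R ω ≤ 8 * M n ω ^ 2 + 3 := by
          filter_upwards [hbd n] with ω h2
          have h2' := abs_le.mp h2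
          simp only [hR]
          have hy2 : d n ω ^ 2 ≤ 1 := by nlinarith
          have hy6 : d n ω ^ 6 ≤ 1 := by
            calc d n ω ^ 6 = (d n ω ^ 2) ^ 3 := by ring
              _ ≤ 1 := pow_le_one₀ (sq_nonneg _) hy2
          nlinarith [sq_nonneg (M n ω - d n ω ^ 3), hy6,
            mul_le_mul_of_nonneg_left hy2 (show (0:ℝ) ≤ 6 * M n ω ^ 2 by positivity)]
        have h8 : Integrable (fun ω => 8 * M n ω ^ 2 + 3) μ :=
          ((hM_int n 2).const_mul 8).add (integrable_const 3)
        calc ∫ ω, R ω ∂μ ≤ ∫ ω, (8 * M n ω ^ 2 + 3) ∂μ := integral_mono_ae hR_int h8 hpt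
          _ = 8 * ∫ ω, M n ω ^ 2 ∂μ + 3 := by
              rw [integral_add ((hM_int n 2).const_mul 8) (integrable_const 3),
                integral_const_mul, integral_const]
              simp
          _ ≤ 8 * n + 3 := by
              have := key2 n
              have h0 : (0:ℝ) ≤ 8 := by norm_num
              nlinarith
      have hab : Integrable (fun ω => M n ω ^ 4 + (4 * M n ω ^ 3) * d n ω) μ :=
        (hM_int n 4).add hcross
      have hsplit : ∫ ω, M (n+1) ω ^ 4 ∂μ
          = ∫ ω, M n ω ^ 4 ∂μ + ∫ ω, (4 * M n ω ^ 3) * d n ω ∂μ + ∫ ω, R ω ∂μ := by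
        rw [integral_congr_ae (Eventually.of_forall hexp), integral_add hab hR_int,
          integral_add (hM_int n 4) hcross]
      have hc0 : ∫ ω, (4 * M n ω ^ 3) * d n ω ∂μ = 0 := by
        refine hzero n (fun ω => 4 * M n ω ^ 3) (4 * (n:ℝ)^3) (((hM_sm n).pow 3).const_mul 4) ?_
        filter_upwards [hM_bd n] with ω h1
        have h3 : |M n ω| ^ 3 ≤ (n:ℝ)^3 := pow_le_pow_left₀ (abs_nonneg _) h1 3
        calc |4 * M n ω ^ 3| = 4 * |M n ω| ^ 3 := by rw [abs_mul, abs_pow]; simp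
          _ ≤ 4 * (n:ℝ)^3 := by linarith
      rw [hsplit, hc0]
      push_cast
      nlinarith
  -- Borel-Cantelli
  have hBC : ∀ m : ℕ, ∀ᵐ ω ∂μ, ∀ᶠ n : ℕ in atTop, ¬ ((n:ℝ)/((m:ℝ)+1) ≤ |M n ω|) := by
    intro m
    set K : ℝ := 4 * ((m:ℝ)+1)^4 with hK
    set Cs : ℕ → Set Ω := fun (n : ℕ) => {ω | (n:ℝ)/((m:ℝ)+1) ≤ |M n ω|} with hCs
    have hCle : ∀ n : ℕ, 1 ≤ n → μ (Cs n) ≤ ENNReal.ofReal (K / (n:ℝ)^2) := by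
      intro n hn
      have hnpos : (0:ℝ) < n := by exact_mod_cast hn
      have hm1 : (0:ℝ) < (m:ℝ)+1 := by positivity
      set c : ℝ := (n:ℝ)/((m:ℝ)+1) with hc
      have hcpos : 0 < c := div_pos hnpos hm1
      have hsub : Cs n ⊆ {ω | c^4 ≤ M n ω ^ 4} := by
        intro ω h
        simp only [hCs, mem_setOf_eq] at h ⊢
        calc c^4 ≤ |M n ω|^4 := pow_le_pow_left₀ hcpos.le h 4
          _ = M n ω ^ 4 := by rw [← abs_pow, abs_of_nonneg (by positivity)]
      have hmarkov : c^4 * (μ {ω | c^4 ≤ M n ω ^ 4}).toReal ≤ ∫ ω, M n ω ^ 4 ∂μ :=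
        mul_meas_ge_le_integral_of_nonneg
          (Eventually.of_forall fun ω => by positivity) (hM_int n 4) (c^4)
      have hT : (μ {ω | c^4 ≤ M n ω ^ 4}).toReal ≤ 4 * (n:ℝ)^2 / c^4 := by
        rw [le_div_iff₀ (by positivity)]
        calc (μ {ω | c^4 ≤ M n ω ^ 4}).toReal * c^4
            = c^4 * (μ {ω | c^4 ≤ M n ω ^ 4}).toReal := mul_comm _ _
          _ ≤ ∫ ω, M n ω ^ 4 ∂μ := hmarkov
          _ ≤ 4 * (n:ℝ)^2 := key4 n
      have heq : 4 * (n:ℝ)^2 / c^4 = K / (n:ℝ)^2 := by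
        rw [hc, hK, div_pow]
        field_simp
      calc μ (Cs n) ≤ μ {ω | c^4 ≤ M n ω ^ 4} := measure_mono hsub
        _ ≤ ENNReal.ofReal (K / (n:ℝ)^2) := by
            rw [ENNReal.le_ofReal_iff_toReal_le (measure_ne_top μ _) (by positivity)]
            rw [← heq]; exact hT
    have hsummable : Summable (fun n : ℕ => K / ((n+1:ℕ):ℝ)^2) := by
      have h1 : Summable (fun n : ℕ => 1 / (n:ℝ)^2) := Real.summable_one_div_nat_pow.2 one_lt_two
      have h2 : Summable (fun n : ℕ => 1 / ((n+1:ℕ):ℝ)^2) := (summable_nat_add_iff (f := fun n : ℕ => 1 / (n:ℝ)^2) 1).2 h1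
      exact (h2.mul_left K).congr (fun n => by ring)
    have hsum : (∑' n, μ (Cs n)) ≠ ⊤ := by
      rw [tsum_eq_zero_add' (f := fun n : ℕ => μ (Cs n)) ENNReal.summable]
      refine ENNReal.add_ne_top.2 ⟨measure_ne_top μ _, ?_⟩
      have hle : (∑' n : ℕ, μ (Cs (n+1)))
          ≤ ∑' n : ℕ, ENNReal.ofReal (K / ((n+1:ℕ):ℝ)^2) :=
        ENNReal.tsum_le_tsum fun n => hCle (n+1) (Nat.le_add_left 1 n)
      refine ne_of_lt (lt_of_le_of_lt hle ?_)
      rw [← ENNReal.ofReal_tsum_of_nonneg (fun n => by positivity) hsummable]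
      exact ENNReal.ofReal_lt_top
    filter_upwards [ae_eventually_notMem hsum] with ω hω
    filter_upwards [hω] with n hn
    simpa [hCs] using hn
  -- conclude
  filter_upwards [ae_all_iff.2 hBC] with ω hω
  rw [Metric.tendsto_atTop]
  intro ε hε
  obtain ⟨m, hm⟩ := exists_nat_one_div_lt hε
  obtain ⟨N, hN⟩ := eventually_atTop.1 (hω m)
  refine ⟨max N 1, fun n hn => ?_⟩
  have hn1 : 1 ≤ n := le_trans (le_max_right N 1) hn
  have hnN : N ≤ n := le_trans (le_max_left N 1) hn
  have hnpos : (0:ℝ) < n := by exact_mod_cast hn1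
  have h := lt_of_not_ge (hN n hnN)
  have hdist : dist (M n ω / n) 0 = |M n ω| / n := by
    rw [Real.dist_eq, sub_zero, abs_div, Nat.abs_cast]
  rw [hdist]
  calc |M n ω| / n < ((n:ℝ)/((m:ℝ)+1)) / n := by
        apply div_lt_div_of_pos_right h hnpos

    _ = 1 / ((m:ℝ)+1) := by rw [div_right_comm, div_self (ne_of_gt hnpos)]
    _ < ε := hm

/-- SLLN for dependent events (Lemma 2.8 / Lemma `Lem:SLLN`): if
`P(A_{i+1} | F_i) ≥ p` on `B_i` and `P(B_i^c) ≤ a e^{-δ i}`, then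
`liminf S_n / n ≥ ε > 0` almost surely, where `S_n = ∑_{i=1}^n 1_{A_i}`. -/
theorem slln_dependent_events
    {Ω : Type*} {m0 : MeasurableSpace Ω} (μ : Measure Ω) [IsProbabilityMeasure μ]
    (ℱ : Filtration ℕ m0) (A B : ℕ → Set Ω)
    (hA : ∀ i, MeasurableSet[ℱ i] (A i)) (hB : ∀ i, MeasurableSet[ℱ i] (B i))
    (p a δ : ℝ) (hp : 0 < p) (ha : 0 < a) (hδ : 0 < δ)
    (hcond : ∀ i : ℕ, ∀ᵐ ω ∂μ, ω ∈ B i →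
      p ≤ (μ[(A (i + 1)).indicator (fun _ => (1 : ℝ)) | ℱ i]) ω)
    (htail : ∀ i : ℕ, μ ((B i)ᶜ) ≤ ENNReal.ofReal (a * Real.exp (-δ * i)))
    (S : ℕ → Ω → ℝ)
    (hS : ∀ n ω, S n ω = ∑ i ∈ Finset.Icc 1 n, (A i).indicator (fun _ => (1 : ℝ)) ω) :
    ∃ ε > (0 : ℝ), ∀ᵐ ω ∂μ, ε ≤ atTop.liminf (fun n : ℕ => S n ω / n) := by
  classical
  set f : ℕ → Ω → ℝ := fun i => (A i).indicator (fun _ => (1 : ℝ)) with hfdef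
  set g : ℕ → Ω → ℝ := fun i => μ[f (i+1) | ℱ i] with hgdef
  set d : ℕ → Ω → ℝ := fun i ω => f (i+1) ω - g i ω with hddef
  have hf01 : ∀ i ω, 0 ≤ f i ω ∧ f i ω ≤ 1 := by
    intro i ω
    by_cases h : ω ∈ A i <;> simp [hfdef, Set.indicator_apply, h]
  have hf_sm : ∀ i, StronglyMeasurable[ℱ i] (f i) := fun i =>
    stronglyMeasurable_const.indicator (hA i)
  have hf_int : ∀ i, Integrable (f i) μ := fun i =>
    (integrable_const (1 : ℝ)).indicator (ℱ.le i _ (hA i))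
  have hg_sm : ∀ i, StronglyMeasurable[ℱ i] (g i) := fun i => stronglyMeasurable_condExp
  have hg_int : ∀ i, Integrable (g i) μ := fun i => integrable_condExp
  have hg0 : ∀ i, 0 ≤ᵐ[μ] g i := fun i =>
    condExp_nonneg (Eventually.of_forall fun ω => (hf01 (i+1) ω).1)
  have hg1 : ∀ i, g i ≤ᵐ[μ] fun _ => (1 : ℝ) := by
    intro i
    have h1 : g i ≤ᵐ[μ] μ[(fun _ => (1:ℝ)) | ℱ i] :=
      condExp_mono (hf_int (i+1)) (integrable_const (1:ℝ))
        (Eventually.of_forall fun ω => (hf01 (i+1) ω).2)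
    have h2 : μ[(fun _ => (1:ℝ)) | ℱ i] = fun _ => (1:ℝ) := condExp_const (ℱ.le i) 1
    rw [h2] at h1
    exact h1
  have hd_sm : ∀ i, StronglyMeasurable[ℱ (i+1)] (d i) := fun i =>
    (hf_sm (i+1)).sub ((hg_sm i).mono (ℱ.mono (Nat.le_succ i)))
  have hd_bd : ∀ i, ∀ᵐ ω ∂μ, |d i ω| ≤ 1 := by
    intro i
    filter_upwards [hg0 i, hg1 i] with ω h0 h1
    have h0' : (0:ℝ) ≤ g i ω := h0
    have h2 := hf01 (i+1) ω
    rw [hddef, abs_le]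
    constructor
    · simp only []
      linarith [h2.1, h0']
    · simp only []
      linarith [h2.2, h0']
  have hcondd : ∀ i, μ[d i | ℱ i] =ᵐ[μ] 0 := by
    intro i
    have h1 : μ[d i | ℱ i] =ᵐ[μ] μ[f (i+1) | ℱ i] - μ[g i | ℱ i] :=
      condExp_sub (hf_int (i+1)) (hg_int i) _
    have h2 : μ[g i | ℱ i] = g i :=
      condExp_of_stronglyMeasurable (ℱ.le i) (hg_sm i) (hg_int i)
    refine h1.trans ?_
    rw [h2]
    refine Eventually.of_forall fun ω => ?_
    simp [hgdef]
  have hmain := slln_aux_mart μ ℱ d hd_sm hd_bd hcondd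
  -- Borel-Cantelli for the B's
  have hBsum : (∑' i, μ ((B i)ᶜ)) ≠ ⊤ := by
    have hsummable : Summable (fun i : ℕ => a * Real.exp (-δ * i)) := by
      have hlt : Real.exp (-δ) < 1 := Real.exp_lt_one_iff.2 (by linarith)
      have h1 : Summable (fun i : ℕ => Real.exp (-δ) ^ i) :=
        summable_geometric_of_lt_one (Real.exp_pos _).le hlt
      refine (h1.mul_left a).congr fun i => ?_
      rw [← Real.exp_nat_mul]
      ring_nf
    refine ne_of_lt (lt_of_le_of_lt (ENNReal.tsum_le_tsum htail) ?_)
    rw [← ENNReal.ofReal_tsum_of_nonneg (fun i => by positivity) hsummable]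
    exact ENNReal.ofReal_lt_top
  have hBev : ∀ᵐ ω ∂μ, ∀ᶠ i in atTop, ω ∈ B i := by
    filter_upwards [ae_eventually_notMem hBsum] with ω hω
    filter_upwards [hω] with i hi
    simpa using hi
  refine ⟨p, hp, ?_⟩
  filter_upwards [hmain, hBev, ae_all_iff.2 hcond, ae_all_iff.2 hg0] with ω hT hBw hCw hg0w
  obtain ⟨N, hN⟩ := eventually_atTop.1 hBw
  have hgp : ∀ i, N ≤ i → p ≤ g i ω := fun i hi => hCw i (hN i hi)
  have hSM : ∀ n, S n ω = (∑ i ∈ Finset.range n, d i ω) + ∑ i ∈ Finset.range n, g i ω := by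
    intro n
    rw [hS n ω]
    have h1 : ∑ i ∈ Finset.Icc 1 n, (A i).indicator (fun _ => (1:ℝ)) ω
        = ∑ i ∈ Finset.range n, f (i+1) ω := by
      rw [← Finset.Ico_add_one_right_eq_Icc, Finset.sum_Ico_eq_sum_range]
      simp [hfdef, add_comm]
    rw [h1, ← Finset.sum_add_distrib]
    refine Finset.sum_congr rfl fun i _ => ?_
    simp [hddef]
  have hglb : ∀ n, N ≤ n → p * (n:ℝ) - p * N ≤ ∑ i ∈ Finset.range n, g i ω := by
    intro n hn
    have h1 : ∑ i ∈ Finset.Ico N n, g i ω ≤ ∑ i ∈ Finset.range n, g i ω := by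
      refine Finset.sum_le_sum_of_subset_of_nonneg ?_ fun i _ _ => hg0w i
      rw [Finset.range_eq_Ico]
      exact Finset.Ico_subset_Ico (Nat.zero_le N) le_rfl
    have h2 : ((n - N : ℕ) : ℝ) * p ≤ ∑ i ∈ Finset.Ico N n, g i ω := by
      have h3 : ∑ _i ∈ Finset.Ico N n, p ≤ ∑ i ∈ Finset.Ico N n, g i ω :=
        Finset.sum_le_sum fun i hi => hgp i (Finset.mem_Ico.mp hi).1
      rwa [Finset.sum_const, Nat.card_Ico, nsmul_eq_mul] at h3
    rw [Nat.cast_sub hn] at h2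
    nlinarith
  have hSnn : ∀ n : ℕ, 0 ≤ S n ω / n := by
    intro n
    refine div_nonneg ?_ (Nat.cast_nonneg n)
    rw [hS n ω]
    exact Finset.sum_nonneg fun i _ => (hf01 i ω).1
  have hlow : ∀ᶠ n : ℕ in atTop,
      (∑ i ∈ Finset.range n, d i ω) / n + (p - p * N / n) ≤ S n ω / n := by
    filter_upwards [eventually_ge_atTop (max N 1)] with n hn
    have hn1 : 1 ≤ n := le_trans (le_max_right N 1) hn
    have hnN : N ≤ n := le_trans (le_max_left N 1) hn
    have hnpos : (0:ℝ) < n := by exact_mod_cast hn1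
    rw [hSM n, add_div]
    have h4 : p - p * N / n ≤ (∑ i ∈ Finset.range n, g i ω) / n := by
      have h5 : (p * (n:ℝ) - p * N) / n ≤ (∑ i ∈ Finset.range n, g i ω) / n := by
        gcongr
        exact hglb n hnN
      calc p - p * N / n = (p * (n:ℝ) - p * N) / n := by
            field_simp
        _ ≤ _ := h5
    linarith
  have hconst : Tendsto (fun n : ℕ => p * (N:ℝ) / n) atTop (nhds 0) :=
    tendsto_const_div_atTop_nhds_zero_nat _
  have hTend : Tendsto (fun n : ℕ =>
      (∑ i ∈ Finset.range n, d i ω) / n + (p - p * N / n)) atTop (nhds p) := by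
    have h6 := hT.add ((tendsto_const_nhds : Tendsto (fun _ : ℕ => p) atTop (nhds p)).sub hconst)
    simpa using h6
  have hcb : IsBoundedUnder (· ≥ ·) atTop
      (fun n : ℕ => (∑ i ∈ Finset.range n, d i ω) / n + (p - p * N / n)) :=
    hTend.isBoundedUnder_ge
  have hSle : ∀ n : ℕ, S n ω / n ≤ 1 := by
    intro n
    rcases Nat.eq_zero_or_pos n with h | h
    · subst h; simp
    · have hnpos : (0:ℝ) < n := by exact_mod_cast h
      rw [div_le_one hnpos, hS]
      calc ∑ i ∈ Finset.Icc 1 n, (A i).indicator (fun _ => (1:ℝ)) ω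
          ≤ ∑ _i ∈ Finset.Icc 1 n, (1:ℝ) := Finset.sum_le_sum fun i _ => (hf01 i ω).2
        _ ≤ n := by simp [Nat.card_Icc]
  have hbdd : IsCoboundedUnder (· ≥ ·) atTop (fun n : ℕ => S n ω / n) :=
    isCoboundedUnder_ge_of_le atTop (fun n => hSle n)
  calc p = atTop.liminf (fun n : ℕ =>
        (∑ i ∈ Finset.range n, d i ω) / n + (p - p * N / n)) := hTend.liminf_eq.symm
    _ ≤ atTop.liminf (fun n : ℕ => S n ω / n) := liminf_le_liminf hlow hcb hbdd
end

section
/- Under the hypotheses of the strong law for dependent events (conditional probability of $A_{i+1}$ given $\mathcal{F}_i$ at least $p$ on $B_i$, and $\mathbb{P}(B_i^c) \le a e^{-\delta i}$), for every $t>0$ the moment generating function satisfies the recursion bound $\mathbb{E}(e^{-t S_n}) \le q(t)\,\mathbb{E}(e^{-t S_{n-1}}) + \mathbb{P}(B_{n-1}^c)$, where $q(t) = e^{-p(1-e^{-t})} < 1$ and $S_n = \sum_{i=1}^n \mathbf{1}_{A_i}$. -/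
open MeasureTheory Filter Set

/-- The moment generating function recursion bound in the proof of the SLLN for
dependent events: `E(e^{-t S_n}) ≤ q(t) E(e^{-t S_{n-1}}) + P(B_{n-1}^c)`,
with `q(t) = e^{-p(1 - e^{-t})} < 1`. -/
theorem mgf_recursion_bound
    {Ω : Type*} {m0 : MeasurableSpace Ω} (μ : Measure Ω) [IsProbabilityMeasure μ]
    (ℱ : Filtration ℕ m0) (A B : ℕ → Set Ω)
    (hA : ∀ i, MeasurableSet[ℱ i] (A i)) (hB : ∀ i, MeasurableSet[ℱ i] (B i))
    (p a δ : ℝ) (hp : 0 < p) (ha : 0 < a) (hδ : 0 < δ)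
    (hcond : ∀ i : ℕ, ∀ᵐ ω ∂μ, ω ∈ B i →
      p ≤ (μ[(A (i + 1)).indicator (fun _ => (1 : ℝ)) | ℱ i]) ω)
    (htail : ∀ i : ℕ, μ ((B i)ᶜ) ≤ ENNReal.ofReal (a * Real.exp (-δ * i)))
    (S : ℕ → Ω → ℝ)
    (hS : ∀ n ω, S n ω = ∑ i ∈ Finset.Icc 1 n, (A i).indicator (fun _ => (1 : ℝ)) ω) :
    ∀ t : ℝ, 0 < t →
      Real.exp (-p * (1 - Real.exp (-t))) < 1 ∧
      ∀ n : ℕ, 1 ≤ n →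
        (∫ ω, Real.exp (-t * S n ω) ∂μ)
          ≤ Real.exp (-p * (1 - Real.exp (-t))) * (∫ ω, Real.exp (-t * S (n - 1) ω) ∂μ)
            + (μ ((B (n - 1))ᶜ)).toReal := by
  intro t ht
  have hexp : Real.exp (-t) < 1 := Real.exp_lt_one_iff.2 (by linarith)
  have hc : 0 < 1 - Real.exp (-t) := by linarith
  set c : ℝ := 1 - Real.exp (-t) with hc_def
  set q : ℝ := Real.exp (-p * c) with hq_def
  have hq1 : q < 1 := Real.exp_lt_one_iff.2 (by nlinarith)
  refine ⟨hq1, ?_⟩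
  intro n hn
  obtain ⟨m, rfl⟩ : ∃ m, n = m + 1 := ⟨n - 1, (Nat.succ_pred_eq_of_pos hn).symm⟩
  simp only [Nat.add_sub_cancel]
  -- Notation
  set f : Ω → ℝ := fun ω => Real.exp (-t * S m ω) with hf_def
  set g : Ω → ℝ := (A (m + 1)).indicator (fun _ => (1 : ℝ)) with hg_def
  set h : Ω → ℝ := fun ω => Real.exp (-t * S (m + 1) ω) with hh_def
  -- basic pointwise bounds
  have hSnonneg : ∀ k ω, 0 ≤ S k ω := fun k ω => by
    rw [hS]
    exact Finset.sum_nonneg fun i _ => Set.indicator_nonneg (fun _ _ => zero_le_one) ω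
  have hf_pos : ∀ ω, 0 < f ω := fun ω => Real.exp_pos _
  have hf_le : ∀ ω, f ω ≤ 1 := fun ω => Real.exp_le_one_iff.2 (by
    have := hSnonneg m ω; nlinarith)
  have hh_pos : ∀ ω, 0 < h ω := fun ω => Real.exp_pos _
  have hh_le : ∀ ω, h ω ≤ 1 := fun ω => Real.exp_le_one_iff.2 (by
    have := hSnonneg (m + 1) ω; nlinarith)
  have hg01 : ∀ ω, 0 ≤ g ω ∧ g ω ≤ 1 := fun ω => by
    rw [hg_def]
    by_cases hω : ω ∈ A (m + 1)
    · simp [Set.indicator_of_mem hω]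
    · simp [Set.indicator_of_notMem hω]
  -- measurability
  have hSm_sm : StronglyMeasurable[ℱ m] (S m) := by
    have : S m = fun ω => ∑ i ∈ Finset.Icc 1 m,
        (A i).indicator (fun _ => (1 : ℝ)) ω := funext fun ω => hS m ω
    rw [this]
    apply Finset.stronglyMeasurable_fun_sum
    intro i hi
    exact stronglyMeasurable_const.indicator
      (ℱ.mono (Finset.mem_Icc.mp hi).2 _ (hA i))
  have hf_sm : StronglyMeasurable[ℱ m] f := by
    exact (Real.continuous_exp.comp_stronglyMeasurable
      (stronglyMeasurable_const.mul hSm_sm))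
  have hf_meas0 : AEStronglyMeasurable f μ :=
    (hf_sm.mono (ℱ.le m)).aestronglyMeasurable
  have hA_meas0 : MeasurableSet (A (m + 1)) := ℱ.le (m + 1) _ (hA (m + 1))
  have hB_meas0 : MeasurableSet (B m) := ℱ.le m _ (hB m)
  have hg_meas0 : AEStronglyMeasurable g μ :=
    (stronglyMeasurable_const.indicator hA_meas0).aestronglyMeasurable
  have hh_meas0 : AEStronglyMeasurable h μ := by
    have hSsum : AEStronglyMeasurable (S (m + 1)) μ := by
      have : S (m + 1) = fun ω => ∑ i ∈ Finset.Icc 1 (m + 1),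
          (A i).indicator (fun _ => (1 : ℝ)) ω := funext fun ω => hS (m + 1) ω
      rw [this]
      exact (Finset.stronglyMeasurable_fun_sum _ fun i hi =>
        stronglyMeasurable_const.indicator
          (ℱ.le i _ (hA i))).aestronglyMeasurable
    exact (Real.continuous_exp.comp_aestronglyMeasurable
      (aestronglyMeasurable_const.mul hSsum))
  -- integrability
  have int_of_bdd : ∀ (φ : Ω → ℝ), AEStronglyMeasurable φ μ →
      (∀ ω, ‖φ ω‖ ≤ 1) → Integrable φ μ := fun φ hφm hφb =>
    (integrable_const (1 : ℝ)).mono' hφm (ae_of_all _ hφb)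
  have hf_int : Integrable f μ := int_of_bdd f hf_meas0 fun ω => by
    rw [Real.norm_eq_abs, abs_of_pos (hf_pos ω)]; exact hf_le ω
  have hh_int : Integrable h μ := int_of_bdd h hh_meas0 fun ω => by
    rw [Real.norm_eq_abs, abs_of_pos (hh_pos ω)]; exact hh_le ω
  have hg_int : Integrable g μ := int_of_bdd g hg_meas0 fun ω => by
    rw [Real.norm_eq_abs, abs_of_nonneg (hg01 ω).1]; exact (hg01 ω).2
  have hfg_int : Integrable (f * g) μ := by
    refine int_of_bdd _ (hf_meas0.mul hg_meas0) fun ω => ?_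
    rw [Pi.mul_apply, Real.norm_eq_abs,
      abs_of_nonneg (mul_nonneg (hf_pos ω).le (hg01 ω).1)]
    calc f ω * g ω ≤ 1 * 1 :=
          mul_le_mul (hf_le ω) (hg01 ω).2 (hg01 ω).1 zero_le_one
      _ = 1 := one_mul 1
  -- key pointwise identity : h = f - c • (f * g)
  have hkey : ∀ ω, h ω = f ω - c * (f ω * g ω) := by
    intro ω
    have hsplit : S (m + 1) ω = S m ω + g ω := by
      rw [hS, hS, hg_def, Finset.sum_Icc_succ_top (Nat.le_add_left 1 m)]
    have hgexp : Real.exp (-t * g ω) = 1 - c * g ω := by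
      rw [hg_def]
      by_cases hω : ω ∈ A (m + 1)
      · simp only [Set.indicator_of_mem hω]
        rw [hc_def]; ring_nf
      · simp [Set.indicator_of_notMem hω]
    have h1 : h ω = f ω * Real.exp (-t * g ω) := by
      simp only [hh_def, hf_def, hsplit, ← Real.exp_add]
      ring_nf
    rw [h1, hgexp]; ring
  -- split the integral over B m and its complement
  have hsplit_int : ∫ ω, h ω ∂μ
      = (∫ ω in B m, h ω ∂μ) + ∫ ω in (B m)ᶜ, h ω ∂μ :=
    (integral_add_compl hB_meas0 hh_int).symm
  -- bound the integral over the complement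
  have hcompl : ∫ ω in (B m)ᶜ, h ω ∂μ ≤ (μ ((B m)ᶜ)).toReal := by
    calc ∫ ω in (B m)ᶜ, h ω ∂μ ≤ ∫ _ω in (B m)ᶜ, (1 : ℝ) ∂μ := by
          refine setIntegral_mono_on hh_int.integrableOn
            (integrableOn_const (measure_ne_top μ _))
            hB_meas0.compl fun ω _ => hh_le ω
      _ = (μ ((B m)ᶜ)).toReal := by simp [measureReal_def]
  -- the conditional expectation argument on B m
  set F : Ω → ℝ := (B m).indicator f with hF_def
  have hF_sm : StronglyMeasurable[ℱ m] F := hf_sm.indicator (hB m)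
  have hF_nonneg : ∀ ω, 0 ≤ F ω :=
    fun ω => Set.indicator_nonneg (fun ω' _ => (hf_pos ω').le) ω
  have hF_int : Integrable F μ := hf_int.indicator hB_meas0
  have hFg_int : Integrable (F * g) μ := by
    refine int_of_bdd _ ((hF_sm.mono (ℱ.le m)).aestronglyMeasurable.mul hg_meas0)
      fun ω => ?_
    rw [Pi.mul_apply, Real.norm_eq_abs,
      abs_of_nonneg (mul_nonneg (hF_nonneg ω) (hg01 ω).1)]
    have hFle : F ω ≤ 1 := by
      rw [hF_def]
      by_cases hω : ω ∈ B m
      · rw [Set.indicator_of_mem hω]; exact hf_le ω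
      · rw [Set.indicator_of_notMem hω]; exact zero_le_one
    calc F ω * g ω ≤ 1 * 1 :=
          mul_le_mul hFle (hg01 ω).2 (hg01 ω).1 zero_le_one
      _ = 1 := one_mul 1
  have hBfg : ∫ ω in B m, f ω * g ω ∂μ = ∫ ω, F ω * g ω ∂μ := by
    rw [← integral_indicator hB_meas0]
    congr 1
    funext ω
    rw [hF_def]
    by_cases hω : ω ∈ B m
    · simp [Set.indicator_of_mem hω]
    · simp [Set.indicator_of_notMem hω]
  have hpull : ∫ ω, F ω * g ω ∂μ = ∫ ω, F ω * (μ[g | ℱ m]) ω ∂μ := by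
    have h1 : μ[F * g | ℱ m] =ᵐ[μ] F * μ[g | ℱ m] :=
      condExp_mul_of_stronglyMeasurable_left hF_sm hFg_int hg_int
    calc ∫ ω, F ω * g ω ∂μ = ∫ ω, (F * g) ω ∂μ := rfl
      _ = ∫ ω, (μ[F * g | ℱ m]) ω ∂μ := (integral_condExp (ℱ.le m)).symm
      _ = ∫ ω, (F * μ[g | ℱ m]) ω ∂μ := integral_congr_ae h1
      _ = ∫ ω, F ω * (μ[g | ℱ m]) ω ∂μ := rfl
  have hFcond_int : Integrable (fun ω => F ω * (μ[g | ℱ m]) ω) μ := by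
    refine Integrable.bdd_mul (c := 1) (integrable_condExp) 
      (hF_sm.mono (ℱ.le m)).aestronglyMeasurable (ae_of_all _ fun ω => ?_)
    rw [Real.norm_eq_abs, abs_of_nonneg (hF_nonneg ω)]
    rw [hF_def]
    by_cases hω : ω ∈ B m
    · rw [Set.indicator_of_mem hω]; exact hf_le ω
    · rw [Set.indicator_of_notMem hω]; exact zero_le_one
  have hlow : p * ∫ ω, F ω ∂μ ≤ ∫ ω, F ω * (μ[g | ℱ m]) ω ∂μ := by
    rw [← integral_const_mul]
    refine integral_mono_ae (hF_int.const_mul p) hFcond_int ?_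
    filter_upwards [hcond m] with ω hω
    rw [hF_def]
    by_cases hωB : ω ∈ B m
    · rw [Set.indicator_of_mem hωB]
      have hp' : p ≤ (μ[g | ℱ m]) ω := hω hωB
      calc p * f ω = f ω * p := mul_comm _ _
        _ ≤ f ω * (μ[g | ℱ m]) ω := mul_le_mul_of_nonneg_left hp' (hf_pos ω).le
    · rw [Set.indicator_of_notMem hωB]; simp
  have hFB : ∫ ω, F ω ∂μ = ∫ ω in B m, f ω ∂μ := by
    rw [hF_def, integral_indicator hB_meas0]
  -- bound ∫_B h
  have hBh : ∫ ω in B m, h ω ∂μ ≤ (1 - c * p) * ∫ ω in B m, f ω ∂μ := by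
    have heq : ∫ ω in B m, h ω ∂μ
        = (∫ ω in B m, f ω ∂μ) - c * ∫ ω in B m, f ω * g ω ∂μ := by
      calc ∫ ω in B m, h ω ∂μ
          = ∫ ω in B m, (f ω - c * (f ω * g ω)) ∂μ := by
            exact integral_congr_ae (ae_of_all _ fun ω => hkey ω)
        _ = (∫ ω in B m, f ω ∂μ) - ∫ ω in B m, c * (f ω * g ω) ∂μ :=
            integral_sub hf_int.integrableOn
              ((hfg_int.const_mul c).integrableOn)
        _ = (∫ ω in B m, f ω ∂μ) - c * ∫ ω in B m, f ω * g ω ∂μ := by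
            rw [integral_const_mul]
    rw [heq]
    have : p * ∫ ω in B m, f ω ∂μ ≤ ∫ ω in B m, f ω * g ω ∂μ := by
      rw [hBfg, hpull, ← hFB]; exact hlow
    nlinarith [hc]
  -- combine
  have hBf_nonneg : 0 ≤ ∫ ω in B m, f ω ∂μ :=
    setIntegral_nonneg hB_meas0 fun ω _ => (hf_pos ω).le
  have hBf_le : ∫ ω in B m, f ω ∂μ ≤ ∫ ω, f ω ∂μ :=
    setIntegral_le_integral hf_int (ae_of_all _ fun ω => (hf_pos ω).le)
  have hqbound : 1 - c * p ≤ q := by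
    have := Real.add_one_le_exp (-(p * c))
    rw [hq_def]
    have : -(p * c) + 1 ≤ Real.exp (-(p * c)) := this
    have heq : -p * c = -(p * c) := by ring
    rw [heq]
    linarith
  have hfinal : (1 - c * p) * ∫ ω in B m, f ω ∂μ ≤ q * ∫ ω, f ω ∂μ := by
    rcases le_or_gt 0 (1 - c * p) with hpos | hneg
    · exact mul_le_mul hqbound hBf_le hBf_nonneg (by positivity)
    · have h1 : (1 - c * p) * ∫ ω in B m, f ω ∂μ ≤ 0 :=
        mul_nonpos_of_nonpos_of_nonneg hneg.le hBf_nonneg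
      have h2 : 0 ≤ q * ∫ ω, f ω ∂μ := by
        have : 0 ≤ ∫ ω, f ω ∂μ :=
          integral_nonneg fun ω => (hf_pos ω).le
        positivity
      linarith
  calc ∫ ω, h ω ∂μ
      = (∫ ω in B m, h ω ∂μ) + ∫ ω in (B m)ᶜ, h ω ∂μ := hsplit_int
    _ ≤ (1 - c * p) * (∫ ω in B m, f ω ∂μ) + (μ ((B m)ᶜ)).toReal :=
        add_le_add hBh hcompl
    _ ≤ q * (∫ ω, f ω ∂μ) + (μ ((B m)ᶜ)).toReal :=
        add_le_add_left hfinal _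
end

section
/- If $\{A_i\}, \{B_i\}$ are adapted to a filtration with $\mathbb{P}(A_{i+1}\mid\mathcal{F}_i) \ge p$ on $B_i$ and $\mathbb{P}(B_i^c) \le a e^{-\delta i}$, and constants $k > 0$, $b > 0$ are chosen so that $b \le \delta$, $k e^{-b} \ge 1$, and $q(t) e^b + a e^{\delta}/k \le 1$ where $q(t) = e^{-p(1-e^{-t})}$, then $\mathbb{E}(e^{-t S_n}) \le k e^{-bn}$ for all $n \ge 1$, where $S_n = \sum_{i=1}^n \mathbf{1}_{A_i}$. -/
open MeasureTheory Filter Set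

/-- The geometric bound `E(e^{-t S_n}) ≤ k e^{-b n}` for the moment generating
function in the proof of the SLLN for dependent events, under the stated choice
of the constants `k` and `b`. -/
theorem mgf_geometric_bound
    {Ω : Type*} {m0 : MeasurableSpace Ω} (μ : Measure Ω) [IsProbabilityMeasure μ]
    (ℱ : Filtration ℕ m0) (A B : ℕ → Set Ω)
    (hA : ∀ i, MeasurableSet[ℱ i] (A i)) (hB : ∀ i, MeasurableSet[ℱ i] (B i))
    (p a δ : ℝ) (hp : 0 < p) (ha : 0 < a) (hδ : 0 < δ)
    (hcond : ∀ i : ℕ, ∀ᵐ ω ∂μ, ω ∈ B i →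
      p ≤ (μ[(A (i + 1)).indicator (fun _ => (1 : ℝ)) | ℱ i]) ω)
    (htail : ∀ i : ℕ, μ ((B i)ᶜ) ≤ ENNReal.ofReal (a * Real.exp (-δ * i)))
    (S : ℕ → Ω → ℝ)
    (hS : ∀ n ω, S n ω = ∑ i ∈ Finset.Icc 1 n, (A i).indicator (fun _ => (1 : ℝ)) ω)
    (t k b : ℝ) (ht : 0 < t) (hk : 0 < k) (hbpos : 0 < b)
    (hbδ : b ≤ δ) (hkb : 1 ≤ k * Real.exp (-b))
    (hqkb : Real.exp (-p * (1 - Real.exp (-t))) * Real.exp b + a * Real.exp δ / k ≤ 1) :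
    ∀ n : ℕ, 1 ≤ n → (∫ ω, Real.exp (-t * S n ω) ∂μ) ≤ k * Real.exp (-b * n) := by
  set c : ℝ := 1 - Real.exp (-t) with hc
  have hc0 : 0 < c := by
    have : Real.exp (-t) < 1 := Real.exp_lt_one_iff.2 (by linarith)
    simp only [hc]; linarith
  set q : ℝ := Real.exp (-p * c) with hq
  have hq0 : 0 < q := Real.exp_pos _
  set ind : ℕ → Ω → ℝ := fun i => (A i).indicator (fun _ => (1 : ℝ)) with hind
  have hind_sm : ∀ i, StronglyMeasurable[ℱ i] (ind i) := fun i =>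
    stronglyMeasurable_const.indicator (hA i)
  have hind_nonneg : ∀ i ω, 0 ≤ ind i ω := fun i ω =>
    Set.indicator_nonneg (fun _ _ => zero_le_one) ω
  have hind_le : ∀ i ω, ind i ω ≤ 1 := by
    intro i ω; by_cases h : ω ∈ A i <;> simp [hind, Set.indicator, h]
  -- measurability and bounds for S
  have hS_sm : ∀ n, StronglyMeasurable[ℱ n] (S n) := by
    intro n
    have : S n = fun ω => ∑ i ∈ Finset.Icc 1 n, ind i ω := funext fun ω => hS n ω
    rw [this]
    exact Finset.stronglyMeasurable_fun_sum _ fun i hi =>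
      (hind_sm i).mono (ℱ.mono (Finset.mem_Icc.1 hi).2)
  have hS_nonneg : ∀ n ω, 0 ≤ S n ω := by
    intro n ω; rw [hS]
    exact Finset.sum_nonneg fun i _ => hind_nonneg i ω
  -- the exponential functions
  set F : ℕ → Ω → ℝ := fun n ω => Real.exp (-t * S n ω) with hF
  have hF_sm : ∀ n, StronglyMeasurable[ℱ n] (F n) :=
    fun n => Real.continuous_exp.comp_stronglyMeasurable ((hS_sm n).const_mul (-t))
  have hF_nonneg : ∀ n ω, 0 ≤ F n ω := fun n ω => (Real.exp_pos _).le
  have hF_le_one : ∀ n ω, F n ω ≤ 1 := fun n ω =>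
    Real.exp_le_one_iff.2 (mul_nonpos_of_nonpos_of_nonneg (by linarith) (hS_nonneg n ω))
  -- integrability of bounded strongly measurable functions
  have hint : ∀ h : Ω → ℝ, StronglyMeasurable h → (∀ ω, ‖h ω‖ ≤ 1) → Integrable h μ := by
    intro h hm hb
    exact (integrable_const (1 : ℝ)).mono' hm.aestronglyMeasurable (ae_of_all _ hb)
  have hFint : ∀ n, Integrable (F n) μ := fun n =>
    hint _ ((hF_sm n).mono (ℱ.le n)) fun ω => by
      rw [Real.norm_eq_abs, abs_of_nonneg (hF_nonneg n ω)]; exact hF_le_one n ω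
  -- induction
  intro n hn
  induction n, hn using Nat.le_induction with
  | base =>
    simp only [Nat.cast_one, mul_one]
    have h1 : (∫ ω, F 1 ω ∂μ) ≤ ∫ _ω, (1 : ℝ) ∂μ :=
      integral_mono (hFint 1) (integrable_const 1) fun ω => hF_le_one 1 ω
    have h2 : (∫ _ω, (1 : ℝ) ∂μ) = 1 := by simp
    calc (∫ ω, F 1 ω ∂μ) ≤ 1 := by rw [h2] at h1; exact h1
      _ ≤ k * Real.exp (-b) := hkb
  | succ n hn ih =>
    -- the single-step factor
    set g : Ω → ℝ := fun ω => Real.exp (-t * ind (n + 1) ω) with hg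
    have hg_eq : g = fun ω => 1 - c * ind (n + 1) ω := by
      funext ω
      by_cases h : ω ∈ A (n + 1)
      · simp [hg, hind, Set.indicator, h, hc]
      · simp [hg, hind, Set.indicator, h]
    have hg_nonneg : ∀ ω, 0 ≤ g ω := fun ω => (Real.exp_pos _).le
    have hg_le_one : ∀ ω, g ω ≤ 1 := fun ω =>
      Real.exp_le_one_iff.2 (mul_nonpos_of_nonpos_of_nonneg (by linarith) (hind_nonneg _ ω))
    have hg_sm : StronglyMeasurable g :=
      Real.continuous_exp.comp_stronglyMeasurable
        (((hind_sm (n + 1)).mono (ℱ.le (n + 1))).const_mul (-t))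
    have hgint : Integrable g μ := hint _ hg_sm fun ω => by
      rw [Real.norm_eq_abs, abs_of_nonneg (hg_nonneg ω)]; exact hg_le_one ω
    -- splitting the exponential
    have hsplit : F (n + 1) = F n * g := by
      funext ω
      have : S (n + 1) ω = S n ω + ind (n + 1) ω := by
        rw [hS, hS, Finset.sum_Icc_succ_top (by omega : 1 ≤ n + 1)]
      simp only [hF, Pi.mul_apply, hg, this, mul_add, Real.exp_add]
    have hFgint : Integrable (F n * g) μ := by
      refine hint _ (((hF_sm n).mono (ℱ.le n)).mul hg_sm) fun ω => ?_
      rw [Pi.mul_apply, Real.norm_eq_abs,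
        abs_of_nonneg (mul_nonneg (hF_nonneg n ω) (hg_nonneg ω))]
      calc F n ω * g ω ≤ 1 * 1 :=
            mul_le_mul (hF_le_one n ω) (hg_le_one ω) (hg_nonneg ω) zero_le_one
        _ = 1 := mul_one 1
    -- conditional expectation of g
    have hcondg : μ[g | ℱ n] =ᵐ[μ] fun ω => 1 - c * (μ[ind (n + 1) | ℱ n]) ω := by
      have hindint : Integrable (ind (n + 1)) μ := hint _ ((hind_sm _).mono (ℱ.le _))
        fun ω => by
          rw [Real.norm_eq_abs, abs_of_nonneg (hind_nonneg _ ω)]; exact hind_le _ ω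
      have h1 : g = (fun _ => (1 : ℝ)) - c • ind (n + 1) := by
        rw [hg_eq]; funext ω; simp [smul_eq_mul]
      rw [h1]
      refine (condExp_sub (integrable_const 1) (hindint.smul c) _).trans ?_
      have h2 : μ[(fun _ => (1 : ℝ)) | ℱ n] = fun _ => (1 : ℝ) := condExp_const (ℱ.le n) 1
      have h3 : μ[c • ind (n + 1) | ℱ n] =ᵐ[μ] c • μ[ind (n + 1) | ℱ n] :=
        condExp_smul c (ind (n + 1)) (ℱ n)
      filter_upwards [h3] with ω h3ω
      simp [h2, h3ω, smul_eq_mul]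
    -- pull-out property
    have hpull : μ[F n * g | ℱ n] =ᵐ[μ] F n * μ[g | ℱ n] :=
      condExp_mul_of_stronglyMeasurable_left (hF_sm n) hFgint hgint
    -- the a.e. bound on B n
    have hae : ∀ᵐ ω ∂μ, ω ∈ B n → (μ[F n * g | ℱ n]) ω ≤ q * F n ω := by
      filter_upwards [hpull, hcondg, hcond n] with ω h1 h2 h3 hmem
      have hX : p ≤ (μ[ind (n + 1) | ℱ n]) ω := h3 hmem
      have hqb : 1 - c * p ≤ q := by
        have := Real.add_one_le_exp (-(p * c))
        simp only [hq, neg_mul]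
        nlinarith
      calc (μ[F n * g | ℱ n]) ω = F n ω * (μ[g | ℱ n]) ω := h1
        _ = F n ω * (1 - c * (μ[ind (n + 1) | ℱ n]) ω) := by rw [h2]
        _ ≤ F n ω * (1 - c * p) := by
            apply mul_le_mul_of_nonneg_left _ (hF_nonneg n ω)
            nlinarith
        _ ≤ F n ω * q := mul_le_mul_of_nonneg_left hqb (hF_nonneg n ω)
        _ = q * F n ω := mul_comm _ _
    -- measurability of B n in m0
    have hBn : MeasurableSet (B n) := ℱ.le n _ (hB n)
    -- estimate on B n
    have hpart1 : (∫ ω in B n, (F n * g) ω ∂μ) ≤ q * (∫ ω, F n ω ∂μ) := by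
      have e1 : (∫ ω in B n, (F n * g) ω ∂μ) = ∫ ω in B n, (μ[F n * g | ℱ n]) ω ∂μ :=
        (setIntegral_condExp (ℱ.le n) hFgint (hB n)).symm
      rw [e1]
      have e2 : (∫ ω in B n, (μ[F n * g | ℱ n]) ω ∂μ) ≤ ∫ ω in B n, q * F n ω ∂μ := by
        apply setIntegral_mono_on_ae (integrable_condExp.integrableOn)
          (((hFint n).const_mul q).integrableOn) hBn hae
      refine e2.trans ?_
      calc (∫ ω in B n, q * F n ω ∂μ) = q * ∫ ω in B n, F n ω ∂μ :=
            integral_const_mul q _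
        _ ≤ q * ∫ ω, F n ω ∂μ := mul_le_mul_of_nonneg_left
            (setIntegral_le_integral (hFint n) (ae_of_all _ (hF_nonneg n))) hq0.le
    -- estimate off B n
    have hpart2 : (∫ ω in (B n)ᶜ, (F n * g) ω ∂μ) ≤ a * Real.exp (-δ * n) := by
      have h0 : 0 ≤ a * Real.exp (-δ * n) := mul_nonneg ha.le (Real.exp_pos _).le
      have hmu : (μ ((B n)ᶜ)).toReal ≤ a * Real.exp (-δ * n) :=
        ENNReal.toReal_le_of_le_ofReal h0 (htail n)
      have hb1 : ‖∫ ω in (B n)ᶜ, (F n * g) ω ∂μ‖ ≤ 1 * (μ ((B n)ᶜ)).toReal := by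
        apply norm_setIntegral_le_of_norm_le_const (measure_lt_top μ _)
        · intro ω _
          rw [Pi.mul_apply, Real.norm_eq_abs,
            abs_of_nonneg (mul_nonneg (hF_nonneg n ω) (hg_nonneg ω))]
          calc F n ω * g ω ≤ 1 * 1 :=
              mul_le_mul (hF_le_one n ω) (hg_le_one ω) (hg_nonneg ω) zero_le_one
            _ = 1 := mul_one 1
      rw [one_mul] at hb1
      calc (∫ ω in (B n)ᶜ, (F n * g) ω ∂μ) ≤ ‖∫ ω in (B n)ᶜ, (F n * g) ω ∂μ‖ :=
            le_abs_self _
        _ ≤ (μ ((B n)ᶜ)).toReal := hb1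
        _ ≤ a * Real.exp (-δ * n) := hmu
    -- combining
    have hdecomp : (∫ ω, F (n + 1) ω ∂μ)
        = (∫ ω in B n, (F n * g) ω ∂μ) + ∫ ω in (B n)ᶜ, (F n * g) ω ∂μ := by
      rw [hsplit, (integral_add_compl hBn hFgint)]
    have hmain : (∫ ω, F (n + 1) ω ∂μ)
        ≤ q * (k * Real.exp (-b * n)) + a * Real.exp (-δ * n) := by
      rw [hdecomp]
      have := mul_le_mul_of_nonneg_left ih hq0.le
      linarith [hpart1, hpart2]
    refine hmain.trans ?_
    -- final arithmetic
    have hkexp : 0 < k * Real.exp (-b * (n + 1 : ℕ)) := mul_pos hk (Real.exp_pos _)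
    have e1 : q * (k * Real.exp (-b * n)) = (q * Real.exp b) * (k * Real.exp (-b * (n + 1 : ℕ))) := by
      have e0 : Real.exp (-b * (n : ℝ)) = Real.exp b * Real.exp (-b * ((n + 1 : ℕ) : ℝ)) := by
        rw [← Real.exp_add]; congr 1; push_cast; ring
      rw [e0]; ring
    have e2 : a * Real.exp (-δ * n) ≤ (a * Real.exp δ / k) * (k * Real.exp (-b * (n + 1 : ℕ))) := by
      have hrhs : (a * Real.exp δ / k) * (k * Real.exp (-b * ((n + 1 : ℕ) : ℝ)))
          = a * Real.exp (δ + -b * ((n + 1 : ℕ) : ℝ)) := by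
        rw [Real.exp_add]; field_simp
      rw [hrhs]
      apply mul_le_mul_of_nonneg_left _ ha.le
      apply Real.exp_le_exp.2
      push_cast
      nlinarith [mul_nonneg (sub_nonneg.2 hbδ) (Nat.cast_nonneg (α := ℝ) n)]
    calc q * (k * Real.exp (-b * n)) + a * Real.exp (-δ * n)
        ≤ (q * Real.exp b + a * Real.exp δ / k) * (k * Real.exp (-b * (n + 1 : ℕ))) := by
          rw [add_mul, ← e1]; linarith
      _ ≤ 1 * (k * Real.exp (-b * (n + 1 : ℕ))) := by
          apply mul_le_mul_of_nonneg_right _ hkexp.le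
          simpa [hq, hc] using hqkb
      _ = k * Real.exp (-b * (n + 1 : ℕ)) := one_mul _
end

section
/- Let $\{X_n\}_{n\ge 0}$ be a time-homogeneous Markov chain with countable state space $E$, and for $F \subseteq E$ let $T(F) = \#\{n \ge 0 : X_n \in F\}$ be the total sojourn time of $F$. Suppose $M(F) := \sup_{y \in F} \mathbb{E}_y(T(F)) \in (0,\infty)$. Then for every starting point $x \in E$ and every integer $m \ge 1$, $\mathbb{E}_x(T(F)^m) \le m! \, (M(F))^m$. -/
open MeasureTheory Set Filter
open scoped ENNReal Topology

/-- Sojourn time (number of visits to `F`) of a discrete-time path. -/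
noncomputable def sojourn {E : Type*} (F : Set E) (ω : ℕ → E) : ℝ≥0∞ :=
  ∑' n : ℕ, F.indicator (fun _ => (1 : ℝ≥0∞)) (ω n)

section Aux

variable {E : Type*} [MeasurableSpace E] [MeasurableSingletonClass E] [Countable E]

lemma measurable_of_countable'' {β : Type*} [MeasurableSpace β] (f : E → β) : Measurable f :=
  fun _ _ => (Set.to_countable _).measurableSet

/-- Sum over ordered tuples of times of products of indicators. -/
noncomputable def Ssum (F : Set E) : ℕ → (ℕ → E) → ℝ≥0∞
  | 0 => fun _ => 1
  | m + 1 => fun ω =>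
      ∑' n : ℕ, F.indicator (fun _ => (1 : ℝ≥0∞)) (ω n) * Ssum F m (fun k => ω (n + k))

lemma measSet_eq (n : ℕ) (y : E) : MeasurableSet {ω' : ℕ → E | ω' n = y} := by
  have : {ω' : ℕ → E | ω' n = y} = (fun ω : ℕ → E => ω n) ⁻¹' {y} := rfl
  rw [this]
  exact measurable_pi_apply n (measurableSet_singleton y)

lemma measSet_mem (F : Set E) (n : ℕ) : MeasurableSet {ω : ℕ → E | ω n ∈ F} := by
  have : {ω : ℕ → E | ω n ∈ F} = (fun ω : ℕ → E => ω n) ⁻¹' F := rfl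
  rw [this]
  exact measurable_pi_apply n (Set.to_countable F).measurableSet

lemma measurable_shift (n : ℕ) : Measurable (fun (ω : ℕ → E) k => ω (n + k)) :=
  measurable_pi_lambda _ fun k => measurable_pi_apply (n + k)

lemma measurable_ind (F : Set E) (n : ℕ) :
    Measurable (fun ω : ℕ → E => F.indicator (fun _ => (1 : ℝ≥0∞)) (ω n)) := by
  have := (measurable_of_countable'' (fun z : E => F.indicator (fun _ => (1 : ℝ≥0∞)) z)).comp
    (measurable_pi_apply (X := fun _ : ℕ => E) n)
  exact this

lemma measurable_Ssum (F : Set E) (m : ℕ) : Measurable (Ssum F m) := by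
  induction m with
  | zero => exact measurable_const
  | succ m ih =>
      exact Measurable.ennreal_tsum fun n =>
        (measurable_ind F n).mul (ih.comp (measurable_shift n))

lemma measurable_sojourn (F : Set E) : Measurable (sojourn F) :=
  Measurable.ennreal_tsum fun n => measurable_ind F n

end Aux

/-- The elementary polynomial inequality `(d+c)^(m+1) ≤ (m+1) d (d+c)^m + c^(m+1)`. -/
lemma poly_ineq (m : ℕ) (d c : ℝ≥0∞) :
    (d + c) ^ (m + 1) ≤ ((m : ℝ≥0∞) + 1) * (d * (d + c) ^ m) + c ^ (m + 1) := by
  induction m with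
  | zero => simp
  | succ m ih =>
      calc (d + c) ^ (m + 1 + 1)
          = (d + c) ^ (m + 1) * d + (d + c) ^ (m + 1) * c := by rw [pow_succ, mul_add]
        _ ≤ (d + c) ^ (m + 1) * d
            + (((m : ℝ≥0∞) + 1) * (d * (d + c) ^ m) + c ^ (m + 1)) * c :=
            add_le_add_right (mul_le_mul_left ih c) _
        _ = (d + c) ^ (m + 1) * d + ((m : ℝ≥0∞) + 1) * (d * ((d + c) ^ m * c))
            + c ^ (m + 1 + 1) := by ring
        _ ≤ (d + c) ^ (m + 1) * d + ((m : ℝ≥0∞) + 1) * (d * ((d + c) ^ m * (d + c)))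
            + c ^ (m + 1 + 1) := by
            gcongr
            exact le_add_self
        _ = (((m : ℝ≥0∞) + 1) + 1) * (d * (d + c) ^ (m + 1)) + c ^ (m + 1 + 1) := by
            rw [← pow_succ]; ring
        _ = (((m + 1 : ℕ) : ℝ≥0∞) + 1) * (d * (d + c) ^ (m + 1)) + c ^ (m + 1 + 1) := by
            push_cast; ring

/-- Key analytic inequality: `(∑ a)^{m+1} ≤ (m+1) ∑_n a_n (tail sum from n)^m`. -/
lemma tail_pow_le (a : ℕ → ℝ≥0∞) (m : ℕ) :
    (∑' k, a k) ^ (m + 1) ≤ ((m : ℝ≥0∞) + 1) * ∑' n, a n * (∑' k, a (n + k)) ^ m := by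
  set t : ℕ → ℝ≥0∞ := fun n => ∑' k, a (n + k) with ht
  have ht0 : t 0 = ∑' k, a k := tsum_congr fun k => by rw [zero_add]
  have hsplit : ∀ n, (∑ k ∈ Finset.range n, a k) + t n = ∑' k, a k := by
    intro n
    have := Summable.sum_add_tsum_nat_add' (f := a) (k := n) ENNReal.summable
    rw [← this]
    congr 1
    exact tsum_congr fun k => by rw [add_comm]
  rw [← ht0]
  by_cases htop : t 0 = ∞
  · rw [htop]
    rw [ENNReal.top_pow m.succ_ne_zero]
    rcases Nat.eq_zero_or_pos m with hm | hm
    · subst hm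
      simp only [pow_zero, mul_one, Nat.cast_zero, zero_add, one_mul]
      rw [← ht0, htop]
    · -- find n with a n ≠ 0 and t n = ∞, or a n = ∞
      have hterm : ∃ n, a n * t n ^ m = ∞ := by
        by_cases hfin : ∀ k, a k ≠ ∞
        · have hne : ∃ n, a n ≠ 0 := by
            by_contra h
            push_neg at h
            rw [ht0] at htop
            rw [tsum_congr (fun k => h k), tsum_zero] at htop
            exact (ENNReal.zero_ne_top) htop
          obtain ⟨n, hn⟩ := hne
          refine ⟨n, ?_⟩
          have hsum_fin : (∑ k ∈ Finset.range n, a k) ≠ ∞ := by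
            refine (ENNReal.sum_lt_top.2 fun k _ => ?_).ne
            exact (hfin k).lt_top
          have htn : t n = ∞ := by
            by_contra htn
            have := hsplit n
            rw [ht0] at htop
            rw [htop] at this
            exact (ENNReal.add_ne_top.2 ⟨hsum_fin, htn⟩) this
          rw [htn, ENNReal.top_pow hm.ne', ENNReal.mul_top hn]
        · push_neg at hfin
          obtain ⟨n, hn⟩ := hfin
          have htn : t n = ∞ := by
            have : a (n + 0) ≤ t n := ENNReal.le_tsum 0
            rw [add_zero, hn] at this
            exact top_le_iff.mp this
          refine ⟨n, ?_⟩
          rw [htn, ENNReal.top_pow hm.ne', hn, ENNReal.top_mul_top]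
      obtain ⟨n, hn⟩ := hterm
      have : (∑' n, a n * t n ^ m) = ∞ :=
        top_le_iff.mp (hn ▸ ENNReal.le_tsum n)
      rw [this, ENNReal.mul_top (lt_of_lt_of_le zero_lt_one le_add_self).ne']
  · have htfin : ∀ n, t n ≠ ∞ := by
      intro n
      refine fun h => htop ?_
      rw [ht0, ← hsplit n, h, add_top]
    have hstep : ∀ n, t n = a n + t (n + 1) := by
      intro n
      have h1 : t n = a (n + 0) + ∑' k, a (n + (k + 1)) :=
        tsum_eq_zero_add' (f := fun k => a (n + k)) ENNReal.summable
      rw [h1, add_zero]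
      congr 1
      exact tsum_congr fun k => by ring_nf
    have hkey : ∀ n, t n ^ (m + 1) ≤ ((m : ℝ≥0∞) + 1) * (a n * t n ^ m) + t (n + 1) ^ (m + 1) := by
      intro n
      have := poly_ineq m (a n) (t (n + 1))
      rw [← hstep n] at this
      exact this
    have htel : ∀ N, t 0 ^ (m + 1)
        ≤ ((m : ℝ≥0∞) + 1) * (∑ n ∈ Finset.range N, a n * t n ^ m) + t N ^ (m + 1) := by
      intro N
      induction N with
      | zero => simp
      | succ N ihN =>
          refine ihN.trans ?_
          rw [Finset.sum_range_succ, mul_add, add_assoc]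
          exact add_le_add_right (hkey N) _
    have hbound : ∀ N, t 0 ^ (m + 1)
        ≤ ((m : ℝ≥0∞) + 1) * (∑' n, a n * t n ^ m) + t N ^ (m + 1) := by
      intro N
      refine (htel N).trans ?_
      gcongr
      exact ENNReal.sum_le_tsum _
    have hlim : Filter.Tendsto (fun N => t N ^ (m + 1)) Filter.atTop (𝓝 0) := by
      have h1 : Filter.Tendsto t Filter.atTop (𝓝 0) := by
        have h2 := ENNReal.tendsto_sum_nat_add a (by rwa [← ht0])
        refine h2.congr fun i => ?_
        exact tsum_congr fun k => by rw [add_comm]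
      have := ENNReal.Tendsto.pow (n := m + 1) h1
      simpa using this
    have hlim2 : Filter.Tendsto
        (fun N => ((m : ℝ≥0∞) + 1) * (∑' n, a n * t n ^ m) + t N ^ (m + 1))
        Filter.atTop (𝓝 (((m : ℝ≥0∞) + 1) * (∑' n, a n * t n ^ m) + 0)) :=
      Filter.Tendsto.const_add _ hlim
    have := ge_of_tendsto' hlim2 hbound
    rwa [add_zero] at this

/-- Pointwise bound: `T^m ≤ m! * Ssum m`. -/
lemma pow_le_Ssum {E : Type*} [MeasurableSpace E] [MeasurableSingletonClass E] [Countable E]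
    (F : Set E) (m : ℕ) : ∀ ω : ℕ → E,
    sojourn F ω ^ m ≤ (m.factorial : ℝ≥0∞) * Ssum F m ω := by
  induction m with
  | zero => intro ω; simp [Ssum]
  | succ m ih =>
      intro ω
      set a : ℕ → ℝ≥0∞ := fun n => F.indicator (fun _ => (1 : ℝ≥0∞)) (ω n) with ha
      have hL := tail_pow_le a m
      have h1 : sojourn F ω ^ (m + 1) ≤ ((m : ℝ≥0∞) + 1) *
          ∑' n, a n * sojourn F (fun k => ω (n + k)) ^ m := hL
      refine h1.trans ?_
      have h2 : ∑' n, a n * sojourn F (fun k => ω (n + k)) ^ m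
          ≤ ∑' n, a n * ((m.factorial : ℝ≥0∞) * Ssum F m (fun k => ω (n + k))) := by
        gcongr with n
        exact ih _
      calc ((m : ℝ≥0∞) + 1) * ∑' n, a n * sojourn F (fun k => ω (n + k)) ^ m
          ≤ ((m : ℝ≥0∞) + 1) *
            ∑' n, a n * ((m.factorial : ℝ≥0∞) * Ssum F m (fun k => ω (n + k))) := by gcongr
        _ = ((m : ℝ≥0∞) + 1) * ((m.factorial : ℝ≥0∞) *
            ∑' n, a n * Ssum F m (fun k => ω (n + k))) := by
            congr 1
            rw [← ENNReal.tsum_mul_left]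
            exact tsum_congr fun n => by ring
        _ = ((m + 1).factorial : ℝ≥0∞) * Ssum F (m + 1) ω := by
            rw [← mul_assoc]
            congr 1
            rw [Nat.factorial_succ]
            push_cast; ring

section Markov

variable {E : Type*} [MeasurableSpace E] [MeasurableSingletonClass E] [Countable E]
variable (P : E → Measure (ℕ → E))

/-- Markov property for Lebesgue integrals. -/
lemma markov_lint
    (hMarkov : ∀ (x y : E) (n : ℕ) (Bs : Set (ℕ → E)), MeasurableSet Bs →
      P x {ω | ω n = y ∧ (fun k => ω (n + k)) ∈ Bs}
        = P x {ω | ω n = y} * P y Bs)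
    (x y : E) (n : ℕ) (f : (ℕ → E) → ℝ≥0∞) (hf : Measurable f) :
    ∫⁻ ω, ({ω' : ℕ → E | ω' n = y}).indicator (fun _ => (1 : ℝ≥0∞)) ω * f (fun k => ω (n + k))
        ∂P x
      = P x {ω' | ω' n = y} * ∫⁻ ω, f ω ∂P y := by
  have hS : MeasurableSet {ω' : ℕ → E | ω' n = y} := measSet_eq n y
  have hmap : Measure.map (fun (ω : ℕ → E) k => ω (n + k))
      ((P x).restrict {ω' | ω' n = y}) = P x {ω' | ω' n = y} • P y := by
    ext Bs hBs
    rw [Measure.map_apply (measurable_shift n) hBs,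
      Measure.restrict_apply ((measurable_shift n) hBs)]
    have hsmul : ((P x {ω' | ω' n = y}) • P y) Bs = P x {ω' | ω' n = y} * P y Bs := rfl
    rw [hsmul, ← hMarkov x y n Bs hBs]
    congr 1
    ext ω
    simp only [Set.mem_inter_iff, Set.mem_preimage, Set.mem_setOf_eq]
    exact and_comm
  calc ∫⁻ ω, ({ω' : ℕ → E | ω' n = y}).indicator (fun _ => (1 : ℝ≥0∞)) ω
          * f (fun k => ω (n + k)) ∂P x
      = ∫⁻ ω, ({ω' : ℕ → E | ω' n = y}).indicator (fun ω => f (fun k => ω (n + k))) ω ∂P x := by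
        refine lintegral_congr fun ω => ?_
        by_cases h : ω ∈ {ω' : ℕ → E | ω' n = y} <;> simp [h]
    _ = ∫⁻ ω in {ω' : ℕ → E | ω' n = y}, f (fun k => ω (n + k)) ∂P x :=
        lintegral_indicator hS _
    _ = ∫⁻ ω', f ω' ∂(Measure.map (fun (ω : ℕ → E) k => ω (n + k))
        ((P x).restrict {ω' | ω' n = y})) := (lintegral_map hf (measurable_shift n)).symm
    _ = P x {ω' | ω' n = y} * ∫⁻ ω, f ω ∂P y := by
        rw [hmap, lintegral_smul_measure, smul_eq_mul]

/-- Decomposition of the indicator of `F` into point indicators. -/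
lemma ind_decomp (F : Set E) (n : ℕ) (ω : ℕ → E) :
    F.indicator (fun _ => (1 : ℝ≥0∞)) (ω n)
      = ∑' y : F, ({ω' : ℕ → E | ω' n = (y : E)}).indicator (fun _ => (1 : ℝ≥0∞)) ω := by
  by_cases h : ω n ∈ F
  · rw [Set.indicator_of_mem h]
    rw [tsum_eq_single (⟨ω n, h⟩ : F) ?_]
    · simp [Set.indicator_of_mem, Set.mem_setOf_eq]
    · intro y hy
      refine Set.indicator_of_notMem (fun hmem => hy ?_) _
      exact Subtype.ext hmem.symm
  · rw [Set.indicator_of_notMem h]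
    symm
    have hz : ∀ y : F, ({ω' : ℕ → E | ω' n = (y : E)}).indicator (fun _ => (1 : ℝ≥0∞)) ω = 0 := by
      intro y
      apply Set.indicator_of_notMem
      intro hmem
      have hmm : ω n = (y : E) := hmem
      exact h (by rw [hmm]; exact y.2)
    rw [tsum_congr hz, tsum_zero]

/-- The expectation of the sojourn time as a sum of marginals. -/
lemma lint_sojourn (F : Set E) (x : E) :
    ∫⁻ ω, sojourn F ω ∂P x = ∑' n : ℕ, P x {ω | ω n ∈ F} := by
  rw [show (fun ω => sojourn F ω) = fun ω => ∑' n : ℕ, F.indicator (fun _ => (1 : ℝ≥0∞)) (ω n)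
    from rfl]
  rw [lintegral_tsum fun n => (measurable_ind F n).aemeasurable]
  refine tsum_congr fun n => ?_
  have hmeas : MeasurableSet {ω : ℕ → E | ω n ∈ F} := measSet_mem F n
  have heq : ∀ ω : ℕ → E, F.indicator (fun _ => (1 : ℝ≥0∞)) (ω n)
      = ({ω' : ℕ → E | ω' n ∈ F}).indicator (fun _ => (1 : ℝ≥0∞)) ω := by
    intro ω
    by_cases h : ω n ∈ F <;> simp [h]
  rw [lintegral_congr heq, lintegral_indicator_const hmeas, one_mul]

/-- Sum over points of `F` of marginals. -/
lemma sum_over_F (F : Set E) (x : E) (n : ℕ) :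
    ∑' y : F, P x {ω | ω n = (y : E)} = P x {ω | ω n ∈ F} := by
  have hmeas : ∀ y : F, MeasurableSet {ω : ℕ → E | ω n = (y : E)} :=
    fun y => measSet_eq n (y : E)
  have hdisj : Pairwise (Function.onFun Disjoint
      fun y : F => {ω : ℕ → E | ω n = (y : E)}) := by
    intro y z hyz
    refine Set.disjoint_left.mpr fun ω h1 h2 => hyz ?_
    exact Subtype.ext ((h1 : ω n = (y : E)).symm.trans h2)
  rw [← measure_iUnion hdisj hmeas]
  congr 1
  ext ω
  simp only [Set.mem_iUnion, Set.mem_setOf_eq]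
  constructor
  · rintro ⟨y, hy⟩; rw [hy]; exact y.2
  · intro h; exact ⟨⟨ω n, h⟩, rfl⟩

/-- Chapman-Kolmogorov step. -/
lemma chapman (F : Set E)
    (hMarkov : ∀ (x y : E) (n : ℕ) (Bs : Set (ℕ → E)), MeasurableSet Bs →
      P x {ω | ω n = y ∧ (fun k => ω (n + k)) ∈ Bs}
        = P x {ω | ω n = y} * P y Bs)
    (x : E) (n : ℕ) :
    P x {ω | ω (n + 1) ∈ F} = ∑' z : E, P x {ω | ω 1 = z} * P z {ω | ω n ∈ F} := by
  have hBs : MeasurableSet {ω : ℕ → E | ω n ∈ F} := measSet_mem F n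
  have h1 : ∀ z : E,
      P x {ω | ω 1 = z ∧ (fun k => ω (1 + k)) ∈ {ω' : ℕ → E | ω' n ∈ F}}
        = P x {ω | ω 1 = z} * P z {ω' | ω' n ∈ F} :=
    fun z => hMarkov x z 1 _ hBs
  have hmeas : ∀ z : E, MeasurableSet
      {ω : ℕ → E | ω 1 = z ∧ (fun k => ω (1 + k)) ∈ {ω' : ℕ → E | ω' n ∈ F}} := by
    intro z
    exact (measSet_eq 1 z).inter (measSet_mem F (1 + n))
  have hdisj : Pairwise (Function.onFun Disjoint
      fun z : E => {ω : ℕ → E | ω 1 = z ∧ (fun k => ω (1 + k)) ∈ {ω' : ℕ → E | ω' n ∈ F}}) := by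
    intro z z' hzz
    exact Set.disjoint_left.mpr fun ω h1 h2 => hzz (h1.1.symm.trans h2.1)
  have hunion : {ω : ℕ → E | ω (n + 1) ∈ F} = ⋃ z : E,
      {ω : ℕ → E | ω 1 = z ∧ (fun k => ω (1 + k)) ∈ {ω' : ℕ → E | ω' n ∈ F}} := by
    ext ω
    simp only [Set.mem_iUnion, Set.mem_setOf_eq]
    constructor
    · intro h
      exact ⟨ω 1, rfl, by rwa [add_comm 1 n]⟩
    · rintro ⟨z, _, h2⟩
      rwa [add_comm n 1]
  rw [hunion, measure_iUnion hdisj hmeas]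
  exact tsum_congr h1

/-- The crucial uniform bound: `E_x(T) ≤ M` for every starting point. -/
lemma e_le_M (F : Set E)
    (hprob : ∀ x, IsProbabilityMeasure (P x))
    (hstart : ∀ x, P x {ω | ω 0 = x} = 1)
    (hMarkov : ∀ (x y : E) (n : ℕ) (Bs : Set (ℕ → E)), MeasurableSet Bs →
      P x {ω | ω n = y ∧ (fun k => ω (n + k)) ∈ Bs}
        = P x {ω | ω n = y} * P y Bs)
    (M : ℝ≥0∞) (hM : M = ⨆ y ∈ F, ∫⁻ ω, sojourn F ω ∂P y) :
    ∀ x : E, ∫⁻ ω, sojourn F ω ∂P x ≤ M := by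
  have hEy : ∀ y ∈ F, ∫⁻ ω, sojourn F ω ∂P y ≤ M := by
    intro y hy
    rw [hM]
    exact le_biSup (f := fun y => ∫⁻ ω, sojourn F ω ∂P y) hy
  have hsum1 : ∀ x : E, ∑' z : E, P x {ω | ω 1 = z} ≤ 1 := by
    intro x
    haveI := hprob x
    have hmeas : ∀ z : E, MeasurableSet {ω : ℕ → E | ω 1 = z} :=
      fun z => measSet_eq 1 z
    have hdisj : Pairwise (Function.onFun Disjoint fun z : E => {ω : ℕ → E | ω 1 = z}) := by
      intro z z' hzz
      exact Set.disjoint_left.mpr fun ω h1 h2 => hzz (h1.symm.trans h2)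
    calc ∑' z : E, P x {ω | ω 1 = z} = P x (⋃ z : E, {ω | ω 1 = z}) :=
          (measure_iUnion hdisj hmeas).symm
      _ ≤ 1 := prob_le_one
  have key : ∀ N : ℕ, ∀ x : E, ∑ n ∈ Finset.range N, P x {ω | ω n ∈ F} ≤ M := by
    intro N
    induction N with
    | zero => intro x; simp
    | succ N ih =>
        intro x
        by_cases hx : x ∈ F
        · calc ∑ n ∈ Finset.range (N + 1), P x {ω | ω n ∈ F}
              ≤ ∑' n : ℕ, P x {ω | ω n ∈ F} := ENNReal.sum_le_tsum _
            _ = ∫⁻ ω, sojourn F ω ∂P x := (lint_sojourn P F x).symm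
            _ ≤ M := hEy x hx
        · haveI := hprob x
          have hu0 : P x {ω | ω 0 ∈ F} = 0 := by
            have hsub : {ω : ℕ → E | ω 0 ∈ F} ⊆ {ω : ℕ → E | ω 0 = x}ᶜ :=
              fun ω h hx0 => hx (hx0 ▸ h)
            refine measure_mono_null hsub ?_
            rw [measure_compl (measSet_eq 0 x) (measure_ne_top _ _),
              hstart x, measure_univ, tsub_self]
          rw [Finset.sum_range_succ']
          rw [hu0, add_zero]
          calc ∑ n ∈ Finset.range N, P x {ω | ω (n + 1) ∈ F}
              = ∑ n ∈ Finset.range N, ∑' z : E, P x {ω | ω 1 = z} * P z {ω | ω n ∈ F} := by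
                refine Finset.sum_congr rfl fun n _ => ?_
                exact chapman P F hMarkov x n
            _ = ∑' z : E, ∑ n ∈ Finset.range N, P x {ω | ω 1 = z} * P z {ω | ω n ∈ F} :=
                (Summable.tsum_finsetSum fun _ _ => ENNReal.summable).symm
            _ = ∑' z : E, P x {ω | ω 1 = z} * ∑ n ∈ Finset.range N, P z {ω | ω n ∈ F} := by
                exact tsum_congr fun z => (Finset.mul_sum _ _ _).symm
            _ ≤ ∑' z : E, P x {ω | ω 1 = z} * M := by
                gcongr with z
                exact ih z
            _ = (∑' z : E, P x {ω | ω 1 = z}) * M := ENNReal.tsum_mul_right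
            _ ≤ 1 * M := by gcongr; exact hsum1 x
            _ = M := one_mul M
  intro x
  rw [lint_sojourn P F x, ENNReal.tsum_eq_iSup_nat]
  exact iSup_le fun N => key N x

/-- The bound on the ordered-tuple sums. -/
lemma lint_Ssum_le (F : Set E)
    (hprob : ∀ x, IsProbabilityMeasure (P x))
    (hMarkov : ∀ (x y : E) (n : ℕ) (Bs : Set (ℕ → E)), MeasurableSet Bs →
      P x {ω | ω n = y ∧ (fun k => ω (n + k)) ∈ Bs}
        = P x {ω | ω n = y} * P y Bs)
    (M : ℝ≥0∞) (heM : ∀ x : E, ∫⁻ ω, sojourn F ω ∂P x ≤ M) :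
    ∀ (m : ℕ) (x : E), ∫⁻ ω, Ssum F m ω ∂P x ≤ M ^ m := by
  intro m
  induction m with
  | zero =>
      intro x
      haveI := hprob x
      simp [Ssum]
  | succ m ih =>
      intro x
      have expand : ∫⁻ ω, Ssum F (m + 1) ω ∂P x
          = ∑' n : ℕ, ∑' y : F, P x {ω' | ω' n = (y : E)} * ∫⁻ ω, Ssum F m ω ∂P (y : E) := by
        show ∫⁻ ω, ∑' n : ℕ, F.indicator (fun _ => (1 : ℝ≥0∞)) (ω n)
            * Ssum F m (fun k => ω (n + k)) ∂P x = _
        rw [lintegral_tsum (f := fun (n : ℕ) (ω : ℕ → E) =>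
            F.indicator (fun _ => (1 : ℝ≥0∞)) (ω n) * Ssum F m (fun k => ω (n + k)))
          (fun n => Measurable.aemeasurable (by
            exact (measurable_ind F n).mul ((measurable_Ssum F m).comp (measurable_shift n))))]
        refine tsum_congr fun n => ?_
        have hpt : ∀ ω : ℕ → E, F.indicator (fun _ => (1 : ℝ≥0∞)) (ω n)
            * Ssum F m (fun k => ω (n + k))
            = ∑' y : F, ({ω' : ℕ → E | ω' n = (y : E)}).indicator (fun _ => (1 : ℝ≥0∞)) ω
              * Ssum F m (fun k => ω (n + k)) := by
          intro ω
          rw [ind_decomp F n ω, ENNReal.tsum_mul_right]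
        rw [lintegral_congr hpt]
        rw [lintegral_tsum (f := fun (y : F) (ω : ℕ → E) =>
            ({ω' : ℕ → E | ω' n = (y : E)}).indicator (fun _ => (1 : ℝ≥0∞)) ω
              * Ssum F m (fun k => ω (n + k)))
          (fun y => Measurable.aemeasurable (by
            exact ((measurable_const.indicator (measSet_eq n (y : E))).mul
              ((measurable_Ssum F m).comp (measurable_shift n)))))]
        refine tsum_congr fun y : F => ?_
        exact markov_lint P hMarkov x (y : E) n (Ssum F m) (measurable_Ssum F m)
      rw [expand]
      calc ∑' n : ℕ, ∑' y : F, P x {ω' | ω' n = (y : E)} * ∫⁻ ω, Ssum F m ω ∂P (y : E)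
          ≤ ∑' n : ℕ, ∑' y : F, P x {ω' | ω' n = (y : E)} * M ^ m := by
            gcongr with n y
            exact ih _
        _ = (∑' n : ℕ, P x {ω | ω n ∈ F}) * M ^ m := by
            rw [← ENNReal.tsum_mul_right]
            refine tsum_congr fun n => ?_
            rw [ENNReal.tsum_mul_right, sum_over_F P F x n]
        _ = (∫⁻ ω, sojourn F ω ∂P x) * M ^ m := by rw [lint_sojourn P F x]
        _ ≤ M * M ^ m := by gcongr; exact heM x
        _ = M ^ (m + 1) := (pow_succ' M m).symm

end Markov

/-- Moment bound for the sojourn time of a time-homogeneous Markov chain: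
`E_x(T(F)^m) ≤ m! M(F)^m` where `M(F) = sup_{y ∈ F} E_y(T(F))`. -/
theorem sojourn_moment_bound
    {E : Type*} [MeasurableSpace E] [MeasurableSingletonClass E] [Countable E]
    (P : E → Measure (ℕ → E)) (hprob : ∀ x, IsProbabilityMeasure (P x))
    (hstart : ∀ x, P x {ω | ω 0 = x} = 1)
    (hMarkov : ∀ (x y : E) (n : ℕ) (Bs : Set (ℕ → E)), MeasurableSet Bs →
      P x {ω | ω n = y ∧ (fun k => ω (n + k)) ∈ Bs}
        = P x {ω | ω n = y} * P y Bs)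
    (F : Set E)
    (M : ℝ≥0∞) (hM : M = ⨆ y ∈ F, ∫⁻ ω, sojourn F ω ∂P y)
    (hMpos : 0 < M) (hMfin : M < ⊤) :
    ∀ (x : E) (m : ℕ), 1 ≤ m →
      (∫⁻ ω, (sojourn F ω) ^ m ∂P x) ≤ (m.factorial : ℝ≥0∞) * M ^ m := by
  intro x m _
  have heM := e_le_M P F hprob hstart hMarkov M hM
  calc ∫⁻ ω, (sojourn F ω) ^ m ∂P x
      ≤ ∫⁻ ω, (m.factorial : ℝ≥0∞) * Ssum F m ω ∂P x :=
        lintegral_mono fun ω => pow_le_Ssum F m ω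
    _ = (m.factorial : ℝ≥0∞) * ∫⁻ ω, Ssum F m ω ∂P x :=
        lintegral_const_mul _ (measurable_Ssum F m)
    _ ≤ (m.factorial : ℝ≥0∞) * M ^ m := by
        gcongr
        exact lint_Ssum_le P F hprob hMarkov M heM m x
end

section
/- (Discrete density lemma) Let $h$ be a measure function (continuous, increasing, $h(0)=0$, doubling: $h(2r) \le c_h h(r)$ for $r \in [0,1/2]$), and let $\mu$ be a measure on a set $A \subseteq S_n \subseteq \mathbb{Z}^d$. If $\mu(A \cap V(x,2^k)) \le a_1 h(2^{k-n})$ for all $x \in \mathbb{Z}^d$ and all $0 \le k \le n$, then the discrete Hausdorff content satisfies $\nu_h(A, S_n) \ge 2^{-d} a_1^{-1} \mu(A)$. -/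
open Set MeasureTheory
open scoped ENNReal

/-- The discrete cube `C(x, r) = {y : xᵢ ≤ yᵢ < xᵢ + r}` in `ℤ^d`. -/
def Cube {d : ℕ} (x : Fin d → ℤ) (r : ℕ) : Set (Fin d → ℤ) :=
  {y | ∀ i, x i ≤ y i ∧ y i < x i + r}

/-- The centered cube `V(x, m) = {y : xᵢ - m/2 ≤ yᵢ < xᵢ + m/2}` in `ℤ^d`. -/
def VCube {d : ℕ} (x : Fin d → ℤ) (m : ℕ) : Set (Fin d → ℤ) :=
  {y | ∀ i, 2 * x i - m ≤ 2 * y i ∧ 2 * y i < 2 * x i + m}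

/-- The shells `S_1 = V(0,2)`, `S_n = V(0,2^n) \ V(0,2^{n-1})` for `n ≥ 2`. -/
def Shell (d n : ℕ) : Set (Fin d → ℤ) :=
  if n ≤ 1 then VCube (0 : Fin d → ℤ) 2
  else VCube (0 : Fin d → ℤ) (2 ^ n) \ VCube (0 : Fin d → ℤ) (2 ^ (n - 1))

/-- Discrete Hausdorff content `ν_h(A, S_n)`. -/
noncomputable def nuH {d : ℕ} (h : ℝ → ℝ) (A : Set (Fin d → ℤ)) (n : ℕ) : ℝ :=
  sInf {t : ℝ | ∃ (k : ℕ) (c : Fin k → (Fin d → ℤ) × ℕ),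
    (∀ i, 1 ≤ (c i).2) ∧
    A ∩ Shell d n ⊆ ⋃ i, Cube (c i).1 (c i).2 ∧
    t = ∑ i, h (((c i).2 : ℝ) / 2 ^ n)}

/-- A cube of side `r ≤ r'` is contained in the cube with the same corner and side `r'`. -/
lemma cube_mono {d : ℕ} (x : Fin d → ℤ) {r r' : ℕ} (hrr : r ≤ r') :
    Cube x r ⊆ Cube x r' := by
  intro y hy i
  obtain ⟨h1, h2⟩ := hy i
  exact ⟨h1, h2.trans_le (by exact_mod_cast (add_le_add_iff_left (x i)).mpr (Int.ofNat_le.mpr hrr))⟩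

/-- Any dyadic cube is contained in a centered dyadic cube of the same side. -/
lemma cube_subset_vcube {d : ℕ} (z : Fin d → ℤ) (k : ℕ) :
    ∃ w : Fin d → ℤ, Cube z (2 ^ k) ⊆ VCube w (2 ^ k) := by
  cases k with
  | zero =>
    refine ⟨z, fun y hy i => ?_⟩
    obtain ⟨h1, h2⟩ := hy i
    simp only [pow_zero] at h1 h2 ⊢
    push_cast at h2 ⊢
    omega
  | succ m =>
    refine ⟨fun i => z i + 2 ^ m, fun y hy i => ?_⟩
    obtain ⟨h1, h2⟩ := hy i
    push_cast at h2 ⊢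
    rw [pow_succ] at h2 ⊢
    constructor <;> nlinarith [pow_pos (by norm_num : (0:ℤ) < 2) m]

/-- A cube of side `2^(k+1)` is covered by `2^d` cubes of side `2^k`. -/
lemma cube_cover {d : ℕ} (x : Fin d → ℤ) (k : ℕ) :
    Cube x (2 ^ (k + 1)) ⊆
      ⋃ ε : Fin d → Bool, Cube (fun i => x i + if ε i then (2:ℤ) ^ k else 0) (2 ^ k) := by
  intro y hy
  refine mem_iUnion.mpr ⟨fun i => decide (x i + (2:ℤ) ^ k ≤ y i), fun i => ?_⟩
  obtain ⟨h1, h2⟩ := hy i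
  push_cast at h2 ⊢
  rw [pow_succ] at h2
  simp only [decide_eq_true_eq]
  rcases le_or_gt (x i + (2:ℤ) ^ k) (y i) with hc | hc
  · rw [if_pos hc]
    exact ⟨hc, by linarith⟩
  · rw [if_neg hc.not_ge, add_zero]
    exact ⟨h1, hc⟩

/-- Discrete density lemma: if `μ` is a finite measure on `A ⊆ S_n` with
`μ(A ∩ V(x, 2^k)) ≤ a₁ h(2^{k-n})` for all `x` and `0 ≤ k ≤ n`, then
`ν_h(A, S_n) ≥ 2^{-d} a₁^{-1} μ(A)`. -/
theorem discrete_density_lemma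
    {d : ℕ} (hd : 1 ≤ d)
    (h : ℝ → ℝ) (c_h : ℝ)
    (hcont : Continuous h) (hmono : Monotone h) (h0 : h 0 = 0)
    (hdoub : ∀ r ∈ Icc (0 : ℝ) (1 / 2), h (2 * r) ≤ c_h * h r)
    (n : ℕ) (hn : 1 ≤ n)
    (A : Set (Fin d → ℤ)) (hA : A ⊆ Shell d n)
    (μ : Measure (Fin d → ℤ)) [IsFiniteMeasure μ] (hsupp : μ Aᶜ = 0)
    (a1 : ℝ) (ha1 : 0 < a1)
    (hgrowth : ∀ (x : Fin d → ℤ) (k : ℕ), k ≤ n →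
      μ (A ∩ VCube x (2 ^ k)) ≤ ENNReal.ofReal (a1 * h ((2 : ℝ) ^ k / 2 ^ n))) :
    ((2 : ℝ) ^ d)⁻¹ * a1⁻¹ * (μ A).toReal ≤ nuH h A n := by
  obtain ⟨m, rfl⟩ : ∃ m, n = m + 1 := ⟨n - 1, by omega⟩
  set n := m + 1
  have hpos : ∀ t : ℝ, 0 ≤ t → 0 ≤ h t := fun t ht => h0 ▸ hmono ht
  -- the shell is contained in the big centered cube
  have hshell : Shell d n ⊆ VCube (0 : Fin d → ℤ) (2 ^ n) := by
    unfold Shell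
    split_ifs with h1
    · have hm : m = 0 := by omega
      subst hm
      norm_num
    · exact diff_subset
  have hAV : A ⊆ VCube (0 : Fin d → ℤ) (2 ^ n) := hA.trans hshell
  -- key estimate: the measure of `A` inside any cube of side `r ≥ 1`
  have key : ∀ (x : Fin d → ℤ) (r : ℕ), 1 ≤ r →
      μ (A ∩ Cube x r) ≤ ENNReal.ofReal ((2:ℝ) ^ d * a1 * h ((r : ℝ) / 2 ^ n)) := by
    intro x r hr
    have h2n : (0:ℝ) < (2:ℝ) ^ n := by positivity
    rcases le_or_gt (2 ^ n) r with hbig | hsmall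
    · -- huge cube: the whole measure is small
      have hsub : A ∩ Cube x r ⊆ A ∩ VCube (0 : Fin d → ℤ) (2 ^ n) := fun y hy =>
        ⟨hy.1, hAV hy.1⟩
      have h1 := hgrowth 0 n le_rfl
      have hle : μ (A ∩ Cube x r) ≤ ENNReal.ofReal (a1 * h ((2:ℝ) ^ n / 2 ^ n)) :=
        (measure_mono hsub).trans h1
      refine hle.trans (ENNReal.ofReal_le_ofReal ?_)
      rw [div_self h2n.ne']
      have h1r : (1:ℝ) ≤ (r:ℝ) / 2 ^ n := by
        rw [le_div_iff₀ h2n]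
        calc (1:ℝ) * 2 ^ n = ((2 ^ n : ℕ) : ℝ) := by push_cast; ring
        _ ≤ r := by exact_mod_cast hbig
      have hmono1 : h 1 ≤ h ((r:ℝ) / 2 ^ n) := hmono h1r
      have h2d : (1:ℝ) ≤ 2 ^ d := one_le_pow₀ one_le_two
      have hnn : 0 ≤ h ((r:ℝ) / 2 ^ n) := hpos _ (by positivity)
      nlinarith [mul_le_mul_of_nonneg_left hmono1 ha1.le,
        mul_le_mul_of_nonneg_right h2d (mul_nonneg ha1.le hnn)]
    · -- small cube: round up to a dyadic side and cover by `2^d` centered cubes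
      set k := Nat.log 2 r with hk
      have hk1 : 2 ^ k ≤ r := Nat.pow_log_le_self 2 (by omega)
      have hk2 : r < 2 ^ (k + 1) := Nat.lt_pow_succ_log_self (by norm_num) r
      have hkn : k ≤ n := by
        by_contra hcon
        have : 2 ^ n < 2 ^ k := Nat.pow_lt_pow_right (by norm_num) (by omega)
        omega
      -- choose centers for the covering cubes
      choose w hw using fun ε : Fin d → Bool =>
        cube_subset_vcube (fun i => x i + if ε i then (2:ℤ) ^ k else 0) k
      have hcov : A ∩ Cube x r ⊆ ⋃ ε : Fin d → Bool, A ∩ VCube (w ε) (2 ^ k) := by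
        intro y hy
        have : y ∈ Cube x (2 ^ (k + 1)) := cube_mono x hk2.le hy.2
        obtain ⟨ε, hε⟩ := mem_iUnion.mp (cube_cover x k this)
        exact mem_iUnion.mpr ⟨ε, hy.1, hw ε hε⟩
      have hsum : μ (A ∩ Cube x r) ≤
          ∑ ε : Fin d → Bool, μ (A ∩ VCube (w ε) (2 ^ k)) :=
        (measure_mono hcov).trans (measure_iUnion_fintype_le μ _)
      have hsum2 : μ (A ∩ Cube x r) ≤
          ∑ _ε : Fin d → Bool, ENNReal.ofReal (a1 * h ((2:ℝ) ^ k / 2 ^ n)) :=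
        hsum.trans (Finset.sum_le_sum fun ε _ => hgrowth (w ε) k hkn)
      have hcard : (Fintype.card (Fin d → Bool)) = 2 ^ d := by
        rw [Fintype.card_fun, Fintype.card_bool, Fintype.card_fin]
      have heq : (∑ _ε : Fin d → Bool, ENNReal.ofReal (a1 * h ((2:ℝ) ^ k / 2 ^ n)))
          = ENNReal.ofReal ((2:ℝ) ^ d * (a1 * h ((2:ℝ) ^ k / 2 ^ n))) := by
        rw [Finset.sum_const, Finset.card_univ, hcard, nsmul_eq_mul,
          show ((2 ^ d : ℕ) : ℝ≥0∞) = ENNReal.ofReal ((2:ℝ) ^ d) by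
            rw [ENNReal.ofReal_pow (by norm_num)]
            norm_num,
          ← ENNReal.ofReal_mul (by positivity)]
      rw [heq] at hsum2
      refine hsum2.trans (ENNReal.ofReal_le_ofReal ?_)
      have hkr : ((2:ℝ) ^ k) ≤ (r : ℝ) := by exact_mod_cast hk1
      have hmon : h ((2:ℝ) ^ k / 2 ^ n) ≤ h ((r:ℝ) / 2 ^ n) :=
        hmono (by gcongr)
      have h2d : (0:ℝ) ≤ 2 ^ d := by positivity
      nlinarith [mul_le_mul_of_nonneg_left (mul_le_mul_of_nonneg_left hmon ha1.le) h2d]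
  -- the defining set of `nuH` is nonempty
  have hne : {t : ℝ | ∃ (k : ℕ) (c : Fin k → (Fin d → ℤ) × ℕ),
      (∀ i, 1 ≤ (c i).2) ∧
      A ∩ Shell d n ⊆ ⋃ i, Cube (c i).1 (c i).2 ∧
      t = ∑ i, h (((c i).2 : ℝ) / 2 ^ n)}.Nonempty := by
    refine ⟨_, 1, fun _ => ((fun _ => -(2 ^ m : ℤ)), 2 ^ n), fun i => Nat.one_le_two_pow,
      ?_, rfl⟩
    intro y hy
    refine mem_iUnion.mpr ⟨0, fun i => ?_⟩
    have hv := hshell hy.2 i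
    simp only [VCube, Pi.zero_apply, mem_setOf_eq, mul_zero, zero_sub, zero_add] at hv
    obtain ⟨h1, h2⟩ := hv
    push_cast at h1 h2 ⊢
    rw [show ((2:ℤ) ^ n) = 2 ^ m * 2 from pow_succ 2 m] at h1 h2 ⊢
    constructor <;> linarith
  -- conclude
  apply le_csInf hne
  rintro t ⟨K, c, hc1, hc2, rfl⟩
  have hsub : A ⊆ ⋃ i, (A ∩ Cube (c i).1 (c i).2) := by
    intro y hy
    obtain ⟨i, hi⟩ := mem_iUnion.mp (hc2 ⟨hy, hA hy⟩)
    exact mem_iUnion.mpr ⟨i, hy, hi⟩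
  have hμ : μ A ≤ ENNReal.ofReal ((2:ℝ) ^ d * a1 * ∑ i, h (((c i).2 : ℝ) / 2 ^ n)) := by
    calc μ A ≤ μ (⋃ i, (A ∩ Cube (c i).1 (c i).2)) := measure_mono hsub
    _ ≤ ∑ i, μ (A ∩ Cube (c i).1 (c i).2) := measure_iUnion_fintype_le μ _
    _ ≤ ∑ i, ENNReal.ofReal ((2:ℝ) ^ d * a1 * h (((c i).2 : ℝ) / 2 ^ n)) :=
        Finset.sum_le_sum fun i _ => key (c i).1 (c i).2 (hc1 i)
    _ = ENNReal.ofReal (∑ i, (2:ℝ) ^ d * a1 * h (((c i).2 : ℝ) / 2 ^ n)) := by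
        rw [ENNReal.ofReal_sum_of_nonneg]
        intro i _
        exact mul_nonneg (by positivity) (hpos _ (by positivity))
    _ = ENNReal.ofReal ((2:ℝ) ^ d * a1 * ∑ i, h (((c i).2 : ℝ) / 2 ^ n)) := by
        rw [← Finset.mul_sum]
  have hsumnn : 0 ≤ ∑ i, h (((c i).2 : ℝ) / 2 ^ n) :=
    Finset.sum_nonneg fun i _ => hpos _ (by positivity)
  have htoReal : (μ A).toReal ≤ (2:ℝ) ^ d * a1 * ∑ i, h (((c i).2 : ℝ) / 2 ^ n) :=
    ENNReal.toReal_le_of_le_ofReal (mul_nonneg (by positivity) hsumnn) hμ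
  rw [← mul_inv]
  calc ((2:ℝ) ^ d * a1)⁻¹ * (μ A).toReal
      ≤ ((2:ℝ) ^ d * a1)⁻¹ * ((2:ℝ) ^ d * a1 * ∑ i, h (((c i).2 : ℝ) / 2 ^ n)) := by
        apply mul_le_mul_of_nonneg_left htoReal (by positivity)
  _ = ∑ i, h (((c i).2 : ℝ) / 2 ^ n) := by
        field_simp
end

section
/- (Discrete Frostman lemma) Let $h$ be a measure function and $A \subseteq S_n \subseteq \mathbb{Z}^d$. Then there exists a measure $\mu$ supported on $A$ such that $\mu(A) \ge \nu_h(A, S_n)$ and $\mu(V(x, 2^k)) \le 2^d h(2^k/2^n)$ for all $0 \le k \le n$ and all $x \in A$. -/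
open Set MeasureTheory
open scoped ENNReal

namespace DFrost

variable {d : ℕ}

/-- base of the dyadic cube of side `2^j` containing `x` -/
def dbase (j : ℕ) (x : Fin d → ℤ) : Fin d → ℤ := fun i => 2 ^ j * (x i / 2 ^ j)

def DC (j : ℕ) (x : Fin d → ℤ) : Set (Fin d → ℤ) := Cube (dbase j x) (2 ^ j)

lemma pow_pos' (j : ℕ) : (0:ℤ) < 2 ^ j := by positivity

lemma ediv_eq_of (a q : ℤ) {b : ℤ} (hb : 0 < b) (h1 : b * q ≤ a) (h2 : a < b * (q + 1)) :
    a / b = q := by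
  have l1 : q ≤ a / b := (Int.le_ediv_iff_mul_le hb).2 (by linarith [h1])
  have l2 : a / b < q + 1 := (Int.ediv_lt_iff_lt_mul hb).2 (by linarith [h2])
  omega

lemma mem_DC_self (j : ℕ) (x : Fin d → ℤ) : x ∈ DC j x := by
  intro i
  have h1 := Int.mul_ediv_add_emod (x i) (2 ^ j)
  have h2 := Int.emod_lt_of_pos (x i) (pow_pos' j)
  have h3 := Int.emod_nonneg (x i) (pow_pos' j).ne'
  constructor
  · simp only [dbase]; omega
  · simp only [dbase]; push_cast; omega

lemma dbase_eq_of_mem {j : ℕ} {x y : Fin d → ℤ} (hy : y ∈ DC j x) : dbase j y = dbase j x := by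
  funext i
  obtain ⟨h1, h2⟩ := hy i
  simp only [dbase] at h1 h2 ⊢
  congr 1
  refine ediv_eq_of _ _ (pow_pos' j) h1 ?_
  push_cast at h2; linarith

lemma DC_eq_of_mem {j : ℕ} {x y : Fin d → ℤ} (hy : y ∈ DC j x) : DC j y = DC j x := by
  unfold DC; rw [dbase_eq_of_mem hy]

lemma DC_subset {l m : ℕ} (hlm : l ≤ m) (x : Fin d → ℤ) : DC l x ⊆ DC m x := by
  intro y hy i
  obtain ⟨h1, h2⟩ := hy i
  have hsplit : (2:ℤ) ^ m = 2 ^ l * 2 ^ (m - l) := by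
    rw [← pow_add]; congr 1; omega
  have hx1 : dbase m x i ≤ dbase l x i := by
    simp only [dbase]
    have hq : 2 ^ l * (2 ^ (m - l) * (x i / 2 ^ m)) ≤ x i := by
      have e1 := Int.mul_ediv_add_emod (x i) (2 ^ m)
      have e3 := Int.emod_nonneg (x i) (pow_pos' m).ne'
      rw [← mul_assoc, ← hsplit]
      omega
    have hmono2 : 2 ^ (m - l) * (x i / 2 ^ m) ≤ x i / 2 ^ l :=
      (Int.le_ediv_iff_mul_le (pow_pos' l)).2 (by linarith [hq])
    calc (2:ℤ) ^ m * (x i / 2 ^ m) = 2 ^ l * (2 ^ (m - l) * (x i / 2 ^ m)) := by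
          rw [hsplit]; ring
      _ ≤ 2 ^ l * (x i / 2 ^ l) := mul_le_mul_of_nonneg_left hmono2 (pow_pos' l).le
  have hx2 : dbase l x i + 2 ^ l ≤ dbase m x i + 2 ^ m := by
    simp only [dbase]
    have hub : x i < 2 ^ m * (x i / 2 ^ m + 1) := by
      have e1 := Int.mul_ediv_add_emod (x i) (2 ^ m)
      have e2 := Int.emod_lt_of_pos (x i) (pow_pos' m)
      have hr : (2:ℤ) ^ m * (x i / 2 ^ m + 1) = 2 ^ m * (x i / 2 ^ m) + 2 ^ m := by ring
      linarith
    have hlb : 2 ^ l * (x i / 2 ^ l) ≤ x i := by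
      have e1 := Int.mul_ediv_add_emod (x i) (2 ^ l)
      have e3 := Int.emod_nonneg (x i) (pow_pos' l).ne'
      omega
    have hlt : x i / 2 ^ l < 2 ^ (m - l) * (x i / 2 ^ m + 1) := by
      by_contra hcon
      push_neg at hcon
      have hcc : 2 ^ l * (2 ^ (m - l) * (x i / 2 ^ m + 1)) ≤ 2 ^ l * (x i / 2 ^ l) :=
        mul_le_mul_of_nonneg_left hcon (pow_pos' l).le
      rw [← mul_assoc, ← hsplit] at hcc
      linarith
    have h5 : x i / 2 ^ l + 1 ≤ 2 ^ (m - l) * (x i / 2 ^ m + 1) := hlt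
    have h6 := mul_le_mul_of_nonneg_left h5 (pow_pos' l).le
    have h7 : 2 ^ l * (2 ^ (m - l) * (x i / 2 ^ m + 1)) = 2 ^ m * (x i / 2 ^ m) + 2 ^ m := by
      rw [hsplit]; ring
    have h8 : (2:ℤ) ^ l * (x i / 2 ^ l + 1) = 2 ^ l * (x i / 2 ^ l) + 2 ^ l := by ring
    linarith
  have hcl : ((2 ^ l : ℕ) : ℤ) = 2 ^ l := by push_cast; ring
  have hcm : ((2 ^ m : ℕ) : ℤ) = 2 ^ m := by push_cast; ring
  refine ⟨le_trans hx1 h1, ?_⟩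
  have h2' : y i < dbase l x i + 2 ^ l := by rw [← hcl]; exact h2
  have : y i < dbase m x i + 2 ^ m := by linarith
  rw [hcm]; exact this

lemma DC_zero (x : Fin d → ℤ) : DC 0 x = {x} := by
  ext y
  simp only [DC, Cube, dbase, pow_zero, one_mul, Int.ediv_one, Set.mem_setOf_eq,
    Set.mem_singleton_iff, Nat.cast_one]
  constructor
  · intro hy; funext i; have := hy i; omega
  · rintro rfl i; omega


noncomputable def mass (𝔸 : Finset (Fin d → ℤ)) (w : (Fin d → ℤ) → ℝ≥0∞)
    (s : Set (Fin d → ℤ)) : ℝ≥0∞ :=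
  ∑ y ∈ 𝔸, s.indicator w y

noncomputable def frw (𝔸 : Finset (Fin d → ℤ)) (H : ℕ → ℝ≥0∞) : ℕ → (Fin d → ℤ) → ℝ≥0∞
  | 0 => fun x => if x ∈ 𝔸 then H 0 else 0
  | j+1 => fun x =>
      frw 𝔸 H j x * min 1 (H (j+1) / mass 𝔸 (frw 𝔸 H j) (DC (j+1) x))

variable (𝔸 : Finset (Fin d → ℤ)) (H : ℕ → ℝ≥0∞)

lemma frw_succ_le (j : ℕ) (x : Fin d → ℤ) : frw 𝔸 H (j+1) x ≤ frw 𝔸 H j x := by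
  calc frw 𝔸 H (j+1) x
      ≤ frw 𝔸 H j x * 1 := mul_le_mul_right (min_le_left _ _) _
    _ = frw 𝔸 H j x := mul_one _

lemma frw_le {j j' : ℕ} (hjj : j ≤ j') (x : Fin d → ℤ) : frw 𝔸 H j' x ≤ frw 𝔸 H j x := by
  induction j' with
  | zero => simp_all
  | succ m ih =>
    rcases Nat.eq_or_lt_of_le hjj with rfl | hlt
    · exact le_rfl
    · exact (frw_succ_le 𝔸 H m x).trans (ih (by omega))

lemma frw_le_H0 (j : ℕ) (x : Fin d → ℤ) : frw 𝔸 H j x ≤ H 0 := by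
  refine (frw_le 𝔸 H (Nat.zero_le j) x).trans ?_
  simp only [frw]
  split <;> simp

lemma frw_eq_zero {x : Fin d → ℤ} (hx : x ∉ 𝔸) (j : ℕ) : frw 𝔸 H j x = 0 := by
  induction j with
  | zero => simp [frw, hx]
  | succ m ih => simp [frw, ih]

lemma mass_mono (w : (Fin d → ℤ) → ℝ≥0∞) {s t : Set (Fin d → ℤ)} (hst : s ⊆ t) :
    mass 𝔸 w s ≤ mass 𝔸 w t :=
  Finset.sum_le_sum fun y _ =>
    Set.indicator_le_indicator_of_subset hst (fun _ => zero_le) y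

lemma mass_le_mass (w w' : (Fin d → ℤ) → ℝ≥0∞) (hw : ∀ y, w y ≤ w' y)
    (s : Set (Fin d → ℤ)) : mass 𝔸 w s ≤ mass 𝔸 w' s :=
  Finset.sum_le_sum fun y _ => Set.indicator_le_indicator (hw y)

lemma mass_ne_top (hH : H 0 ≠ ⊤) (j : ℕ) (s : Set (Fin d → ℤ)) :
    mass 𝔸 (frw 𝔸 H j) s ≠ ⊤ := by
  refine (ENNReal.sum_lt_top.2 fun y _ => ?_).ne
  calc s.indicator (frw 𝔸 H j) y ≤ frw 𝔸 H j y := Set.indicator_le_self _ _ _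
    _ ≤ H 0 := frw_le_H0 𝔸 H j y
    _ < ⊤ := hH.lt_top

lemma mass_singleton [DecidableEq (Fin d → ℤ)] (w : (Fin d → ℤ) → ℝ≥0∞) (x : Fin d → ℤ) :
    mass 𝔸 w {x} = if x ∈ 𝔸 then w x else 0 := by
  unfold mass
  rw [show (∑ y ∈ 𝔸, ({x} : Set (Fin d → ℤ)).indicator w y)
      = ∑ y ∈ 𝔸, if y = x then w y else 0 from
    Finset.sum_congr rfl fun y _ => by
      by_cases hxy : y = x
      · subst hxy; simp
      · simp [Set.indicator_of_notMem, hxy]]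
  exact Finset.sum_ite_eq' 𝔸 x w

lemma mass_succ_of_subset {j : ℕ} {x : Fin d → ℤ} {s : Set (Fin d → ℤ)}
    (hs : s ⊆ DC (j+1) x) :
    mass 𝔸 (frw 𝔸 H (j+1)) s
      = mass 𝔸 (frw 𝔸 H j) s * min 1 (H (j+1) / mass 𝔸 (frw 𝔸 H j) (DC (j+1) x)) := by
  unfold mass
  rw [Finset.sum_mul]
  refine Finset.sum_congr rfl fun y _ => ?_
  by_cases hys : y ∈ s
  · rw [Set.indicator_of_mem hys, Set.indicator_of_mem hys]
    show frw 𝔸 H (j+1) y = _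
    simp only [frw]
    rw [DC_eq_of_mem (hs hys)]
    rfl
  · rw [Set.indicator_of_notMem hys, Set.indicator_of_notMem hys, zero_mul]

lemma mass_DC_le [DecidableEq (Fin d → ℤ)] {j l : ℕ} (hlj : l ≤ j) (x : Fin d → ℤ) :
    mass 𝔸 (frw 𝔸 H j) (DC l x) ≤ H l := by
  have step1 : mass 𝔸 (frw 𝔸 H j) (DC l x) ≤ mass 𝔸 (frw 𝔸 H l) (DC l x) :=
    mass_le_mass 𝔸 _ _ (fun y => frw_le 𝔸 H hlj y) _
  refine step1.trans ?_
  cases l with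
  | zero =>
    rw [DC_zero, mass_singleton]
    split
    · simp only [frw]; split <;> simp
    · exact zero_le
  | succ m =>
    rw [mass_succ_of_subset 𝔸 H (subset_rfl : DC (m+1) x ⊆ DC (m+1) x)]
    calc mass 𝔸 (frw 𝔸 H m) (DC (m+1) x) * min 1 (H (m+1) / mass 𝔸 (frw 𝔸 H m) (DC (m+1) x))
        ≤ mass 𝔸 (frw 𝔸 H m) (DC (m+1) x) * (H (m+1) / mass 𝔸 (frw 𝔸 H m) (DC (m+1) x)) :=
          mul_le_mul_right (min_le_right _ _) _
      _ ≤ H (m+1) := ENNReal.mul_div_le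

lemma exists_sat [DecidableEq (Fin d → ℤ)] (hH : H 0 ≠ ⊤) (j : ℕ) {x : Fin d → ℤ}
    (hx : x ∈ 𝔸) : ∃ l ≤ j, mass 𝔸 (frw 𝔸 H j) (DC l x) = H l := by
  induction j with
  | zero =>
    refine ⟨0, le_rfl, ?_⟩
    rw [DC_zero, mass_singleton, if_pos hx]
    simp [frw, hx]
  | succ m ih =>
    obtain ⟨l, hl, hsat⟩ := ih
    set mm := mass 𝔸 (frw 𝔸 H m) (DC (m+1) x) with hmm
    have hsub : DC l x ⊆ DC (m+1) x := DC_subset (by omega) x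
    have hkey := mass_succ_of_subset 𝔸 H hsub
    by_cases hc : min 1 (H (m+1) / mm) = 1
    · exact ⟨l, by omega, by rw [hkey, hsat, ← hmm, hc, mul_one]⟩
    · have hlt : H (m+1) / mm < 1 := by
        rcases lt_or_ge (H (m+1) / mm) 1 with hh | hh
        · exact hh
        · exact absurd (min_eq_left hh) hc
      by_cases hm0 : mm = 0
      · have hml : mass 𝔸 (frw 𝔸 H m) (DC l x) ≤ mm := mass_mono 𝔸 _ hsub
        have hHl0 : H l = 0 := le_antisymm (by rw [← hsat]; exact hml.trans hm0.le) (zero_le)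
        exact ⟨l, by omega, by rw [hkey, hsat, hHl0, zero_mul]⟩
      · refine ⟨m+1, le_rfl, ?_⟩
        rw [mass_succ_of_subset 𝔸 H (subset_rfl : DC (m+1) x ⊆ DC (m+1) x), ← hmm,
          min_eq_right hlt.le]
        exact ENNReal.mul_div_cancel hm0 (mass_ne_top 𝔸 H hH m _)

end DFrost


/-- Discrete Frostman lemma: for any measure function `h` and `A ⊆ S_n` there
is a measure `μ` supported on `A` with `μ(A) ≥ ν_h(A, S_n)` and
`μ(V(x, 2^k)) ≤ 2^d h(2^k / 2^n)` for all `0 ≤ k ≤ n` and `x ∈ A`. -/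
theorem discrete_frostman_lemma
    {d : ℕ} (hd : 1 ≤ d)
    (h : ℝ → ℝ) (c_h : ℝ)
    (hcont : Continuous h) (hmono : Monotone h) (h0 : h 0 = 0)
    (hdoub : ∀ r ∈ Icc (0 : ℝ) (1 / 2), h (2 * r) ≤ c_h * h r)
    (n : ℕ) (hn : 1 ≤ n)
    (A : Set (Fin d → ℤ)) (hA : A ⊆ Shell d n) :
    ∃ μ : Measure (Fin d → ℤ), μ Aᶜ = 0 ∧
      ENNReal.ofReal (nuH h A n) ≤ μ A ∧
      ∀ (k : ℕ), k ≤ n → ∀ x ∈ A,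
        μ (VCube x (2 ^ k)) ≤ ENNReal.ofReal (2 ^ d * h ((2 : ℝ) ^ k / 2 ^ n)) := by
  classical
  -- finiteness of A
  have hVsub : VCube (0 : Fin d → ℤ) (2^n) ⊆
      Set.univ.pi (fun _ : Fin d => Set.Icc (-((2^n : ℕ) : ℤ)) ((2^n : ℕ) : ℤ)) := by
    intro y hy i _
    have := hy i
    simp only [VCube, Set.mem_setOf_eq, Pi.zero_apply] at this
    simp only [Set.mem_Icc]
    omega
  have hshell : Shell d n ⊆ VCube (0 : Fin d → ℤ) (2^n) := by
    unfold Shell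
    split_ifs with h1
    · have hn1 : n = 1 := le_antisymm h1 hn
      subst hn1
      norm_num
    · exact Set.diff_subset
  have hAfin : A.Finite :=
    Set.Finite.subset (Set.Finite.subset (Set.Finite.pi (fun _ => Set.finite_Icc _ _)) hVsub)
      (hA.trans hshell)
  set 𝔸 := hAfin.toFinset with h𝔸
  have hmem𝔸 : ∀ {x}, x ∈ 𝔸 ↔ x ∈ A := fun {x} => hAfin.mem_toFinset
  set H : ℕ → ℝ≥0∞ := fun j => ENNReal.ofReal (h ((2:ℝ)^j / 2^n)) with hH
  have hHtop : H 0 ≠ ⊤ := ENNReal.ofReal_ne_top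
  set w := DFrost.frw 𝔸 H n with hw
  set μ : Measure (Fin d → ℤ) := ∑ x ∈ 𝔸, w x • Measure.dirac x with hμ
  have hμapp : ∀ s : Set (Fin d → ℤ), μ s = DFrost.mass 𝔸 w s := by
    intro s
    have hms : MeasurableSet s := s.to_countable.measurableSet
    rw [hμ, Measure.finset_sum_apply]
    refine Finset.sum_congr rfl fun y _ => ?_
    rw [Measure.smul_apply, Measure.dirac_apply' y hms, smul_eq_mul]
    by_cases hys : y ∈ s
    · rw [Set.indicator_of_mem hys, Set.indicator_of_mem hys, Pi.one_apply, mul_one]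
    · rw [Set.indicator_of_notMem hys, Set.indicator_of_notMem hys, mul_zero]
  have hnn : ∀ j : ℕ, 0 ≤ h ((2:ℝ)^j / 2^n) := fun j => by
    rw [← h0]; exact hmono (by positivity)
  refine ⟨μ, ?_, ?_, ?_⟩
  · -- μ Aᶜ = 0
    rw [hμapp]
    refine Finset.sum_eq_zero fun y hy => ?_
    exact Set.indicator_of_notMem (Set.notMem_compl_iff.2 (hmem𝔸.1 hy)) w
  · -- lower bound
    set P : (Fin d → ℤ) → ℕ → Prop := fun x l => DFrost.mass 𝔸 w (DFrost.DC l x) = H l with hP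
    set L : (Fin d → ℤ) → ℕ := fun x => Nat.findGreatest (P x) n with hL
    have hLsat : ∀ x ∈ 𝔸, P x (L x) := by
      intro x hx
      obtain ⟨l, hl, hsat⟩ := DFrost.exists_sat 𝔸 H hHtop n hx
      exact Nat.findGreatest_spec hl hsat
    have hLle : ∀ x, L x ≤ n := fun x => Nat.findGreatest_le n
    have hLmax : ∀ x, ∀ l ≤ n, P x l → l ≤ L x := fun x l hln hp => Nat.le_findGreatest hln hp
    set B : Finset (ℕ × (Fin d → ℤ)) := 𝔸.image (fun x => (L x, DFrost.dbase (L x) x)) with hB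
    have hkeyle : ∀ x ∈ 𝔸, ∀ y ∈ 𝔸, L x ≤ L y → ∀ z, z ∈ DFrost.DC (L x) x →
        z ∈ DFrost.DC (L y) y →
        (L x, DFrost.dbase (L x) x) = (L y, DFrost.dbase (L y) y) := by
      intro x hx y hy hxy z hzx hzy
      have e1 : DFrost.DC (L x) z = DFrost.DC (L x) x := DFrost.DC_eq_of_mem hzx
      have e2 : DFrost.DC (L y) z = DFrost.DC (L y) y := DFrost.DC_eq_of_mem hzy
      have hxin : x ∈ DFrost.DC (L y) y := by
        have h1 : x ∈ DFrost.DC (L x) z := e1 ▸ DFrost.mem_DC_self (L x) x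
        have h2 : x ∈ DFrost.DC (L y) z := DFrost.DC_subset hxy z h1
        rwa [e2] at h2
      have e3 : DFrost.DC (L y) x = DFrost.DC (L y) y := DFrost.DC_eq_of_mem hxin
      have hPx : P x (L y) := by
        show DFrost.mass 𝔸 w (DFrost.DC (L y) x) = H (L y)
        rw [e3]
        exact hLsat y hy
      have hyx : L y ≤ L x := hLmax x (L y) (hLle y) hPx
      have hEq : L x = L y := le_antisymm hxy hyx
      have b1 : DFrost.dbase (L x) z = DFrost.dbase (L x) x := DFrost.dbase_eq_of_mem hzx
      have b2 : DFrost.dbase (L y) z = DFrost.dbase (L y) y := DFrost.dbase_eq_of_mem hzy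
      rw [Prod.mk.injEq]
      exact ⟨hEq, by rw [← b1, hEq, b2]⟩
    have hdisj : ∀ p ∈ B, ∀ q ∈ B, p ≠ q → ∀ z, z ∈ Cube p.2 (2^p.1) →
        z ∉ Cube q.2 (2^q.1) := by
      intro p hp q hq hpq z hzp hzq
      obtain ⟨x, hx, rfl⟩ := Finset.mem_image.1 hp
      obtain ⟨y, hy, rfl⟩ := Finset.mem_image.1 hq
      rcases le_total (L x) (L y) with hle | hle
      · exact hpq (hkeyle x hx y hy hle z hzp hzq)
      · exact hpq ((hkeyle y hy x hx hle z hzq hzp).symm)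
    have hmassB : ∀ p ∈ B, DFrost.mass 𝔸 w (Cube p.2 (2^p.1)) = H p.1 := by
      intro p hp
      obtain ⟨x, hx, rfl⟩ := Finset.mem_image.1 hp
      exact hLsat x hx
    have hcover : ∀ x ∈ A, ∃ p ∈ B, x ∈ Cube p.2 (2^p.1) := by
      intro x hxA
      exact ⟨(L x, DFrost.dbase (L x) x), Finset.mem_image_of_mem _ (hmem𝔸.2 hxA),
        DFrost.mem_DC_self (L x) x⟩
    have hsum_le : ∑ p ∈ B, H p.1 ≤ μ A := by
      rw [hμapp]
      have hAuniv : DFrost.mass 𝔸 w A = ∑ y ∈ 𝔸, w y := by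
        unfold DFrost.mass
        exact Finset.sum_congr rfl fun y hy => Set.indicator_of_mem (hmem𝔸.1 hy) w
      rw [hAuniv]
      calc ∑ p ∈ B, H p.1
          = ∑ p ∈ B, DFrost.mass 𝔸 w (Cube p.2 (2^p.1)) :=
            Finset.sum_congr rfl fun p hp => (hmassB p hp).symm
        _ = ∑ y ∈ 𝔸, ∑ p ∈ B, (Cube p.2 (2^p.1)).indicator w y := by
            unfold DFrost.mass; rw [Finset.sum_comm]
        _ ≤ ∑ y ∈ 𝔸, w y := by
            refine Finset.sum_le_sum fun y _ => ?_
            by_cases hex : ∃ p ∈ B, y ∈ Cube p.2 (2^p.1)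
            · obtain ⟨p0, hp0, hyp0⟩ := hex
              rw [Finset.sum_eq_single_of_mem p0 hp0 (fun q hq hne =>
                Set.indicator_of_notMem (hdisj p0 hp0 q hq (Ne.symm hne) y hyp0) w)]
              rw [Set.indicator_of_mem hyp0]
            · push_neg at hex
              rw [Finset.sum_eq_zero fun q hq => Set.indicator_of_notMem (hex q hq) w]
              exact zero_le
    have hmemt : nuH h A n ≤ ∑ p ∈ B, h ((2:ℝ)^p.1 / 2^n) := by
      apply csInf_le
      · refine ⟨0, ?_⟩
        rintro r ⟨k, c, hc1, hc2, rfl⟩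
        refine Finset.sum_nonneg fun i _ => ?_
        rw [← h0]
        exact hmono (by positivity)
      · refine ⟨B.card, fun i => ((B.equivFin.symm i).1.2, 2 ^ (B.equivFin.symm i).1.1),
          fun i => Nat.one_le_two_pow, ?_, ?_⟩
        · intro z hz
          obtain ⟨p, hp, hzp⟩ := hcover z hz.1
          refine Set.mem_iUnion.2 ⟨B.equivFin ⟨p, hp⟩, ?_⟩
          simpa using hzp
        · rw [← Finset.sum_coe_sort B (fun p => h ((2:ℝ)^p.1 / 2^n)),
            ← Equiv.sum_comp B.equivFin.symm
              (fun b : {x // x ∈ B} => h ((2:ℝ)^(b.1.1) / 2^n))]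
          refine Finset.sum_congr rfl fun i _ => ?_
          congr 1
          push_cast
          ring
    calc ENNReal.ofReal (nuH h A n)
        ≤ ENNReal.ofReal (∑ p ∈ B, h ((2:ℝ)^p.1 / 2^n)) := ENNReal.ofReal_le_ofReal hmemt
      _ = ∑ p ∈ B, ENNReal.ofReal (h ((2:ℝ)^p.1 / 2^n)) :=
          ENNReal.ofReal_sum_of_nonneg fun p _ => hnn p.1
      _ = ∑ p ∈ B, H p.1 := rfl
      _ ≤ μ A := hsum_le
  · -- upper bound
    intro k hkn x _
    rcases Nat.eq_zero_or_pos k with rfl | hk1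
    · have hV1 : VCube x (2^0) = {x} := by
        ext y
        simp only [VCube, Set.mem_setOf_eq, Set.mem_singleton_iff, pow_zero, Nat.cast_one]
        constructor
        · intro hy; funext i; have := hy i; omega
        · rintro rfl i; omega
      rw [hμapp, hV1, DFrost.mass_singleton]
      have hb : (if x ∈ 𝔸 then w x else 0) ≤ H 0 := by
        split
        · exact DFrost.frw_le_H0 𝔸 H n x
        · exact zero_le
      refine hb.trans ?_
      show ENNReal.ofReal (h ((2:ℝ)^0 / 2^n)) ≤ _
      apply ENNReal.ofReal_le_ofReal
      have h2d : (1:ℝ) ≤ 2^d := one_le_pow₀ (by norm_num)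
      calc h ((2:ℝ)^0 / 2^n) = 1 * h ((2:ℝ)^0 / 2^n) := (one_mul _).symm
        _ ≤ 2^d * h ((2:ℝ)^0 / 2^n) := mul_le_mul_of_nonneg_right h2d (hnn 0)
    · set q : Fin d → ℤ := fun i => (x i - 2^(k-1)) / 2^k with hq
      set C : (Fin d → Bool) → Set (Fin d → ℤ) := fun ε =>
        Cube (fun i => 2^k * (q i + if ε i then 1 else 0)) (2^k) with hC
      have hCsub : VCube x (2^k) ⊆ ⋃ ε, C ε := by
        intro y hy
        set t : Fin d → ℤ := fun i => y i / 2^k with htdef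
        have hbounds : ∀ i, q i ≤ t i ∧ t i ≤ q i + 1 ∧ 2^k * t i ≤ y i ∧
            y i < 2^k * t i + 2^k := by
          intro i
          obtain ⟨hy1, hy2⟩ := hy i
          have hcast : ((2^k : ℕ) : ℤ) = 2^k := by push_cast; ring
          rw [hcast] at hy1 hy2
          have hpow : (2:ℤ)^k = 2 * 2^(k-1) := by
            rw [← pow_succ']
            congr 1
            omega
          have ha1 : x i - 2^(k-1) ≤ y i := by linarith
          have ha2 : y i < x i - 2^(k-1) + 2^k := by linarith
          have hq1 : q i ≤ t i := Int.ediv_le_ediv (DFrost.pow_pos' k) ha1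
          have he1 := Int.mul_ediv_add_emod (x i - 2^(k-1)) (2^k)
          have he2 := Int.emod_lt_of_pos (x i - 2^(k-1)) (DFrost.pow_pos' k)
          have he3 := Int.emod_nonneg (x i - 2^(k-1)) (DFrost.pow_pos' k).ne'
          have hy1' := Int.mul_ediv_add_emod (y i) (2^k)
          have hy2' := Int.emod_lt_of_pos (y i) (DFrost.pow_pos' k)
          have hy3' := Int.emod_nonneg (y i) (DFrost.pow_pos' k).ne'
          have ht1 : 2^k * t i ≤ y i := by
            show 2^k * (y i / 2^k) ≤ y i
            omega
          have ht2 : y i < 2^k * t i + 2^k := by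
            show y i < 2^k * (y i / 2^k) + 2^k
            omega
          have hq2 : t i ≤ q i + 1 := by
            show y i / 2 ^ k ≤ (x i - 2 ^ (k-1)) / 2 ^ k + 1
            have hub : y i < ((x i - 2 ^ (k-1)) / 2 ^ k + 2) * 2 ^ k := by
              have hr : ((x i - 2 ^ (k-1)) / 2 ^ k + 2) * 2 ^ k
                  = 2 ^ k * ((x i - 2 ^ (k-1)) / 2 ^ k) + 2 ^ k + 2 ^ k := by ring
              linarith [he1, he2, ha2, hr]
            have h9 := (Int.ediv_lt_iff_lt_mul (DFrost.pow_pos' k)).2 hub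
            omega
          exact ⟨hq1, hq2, ht1, ht2⟩
        refine Set.mem_iUnion.2 ⟨fun i => decide (t i = q i + 1), ?_⟩
        intro i
        obtain ⟨hb1, hb2, hb3, hb4⟩ := hbounds i
        have hcast : ((2^k : ℕ) : ℤ) = 2^k := by push_cast; ring
        by_cases hti : t i = q i + 1
        · have hb : (2:ℤ) ^ k * (q i + if decide (t i = q i + 1) = true then 1 else 0)
              = 2 ^ k * t i := by
            rw [if_pos (by simpa using hti), hti]
          refine ⟨?_, ?_⟩
          · show (2:ℤ) ^ k * (q i + if decide (t i = q i + 1) = true then 1 else 0) ≤ y i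
            rw [hb]; exact hb3
          · show y i < (2:ℤ) ^ k * (q i + if decide (t i = q i + 1) = true then 1 else 0)
                + ((2^k : ℕ) : ℤ)
            rw [hb, hcast]; exact hb4
        · have hti' : t i = q i := by omega
          have hb : (2:ℤ) ^ k * (q i + if decide (t i = q i + 1) = true then 1 else 0)
              = 2 ^ k * t i := by
            rw [if_neg (by simpa using hti), add_zero, hti']
          refine ⟨?_, ?_⟩
          · show (2:ℤ) ^ k * (q i + if decide (t i = q i + 1) = true then 1 else 0) ≤ y i
            rw [hb]; exact hb3
          · show y i < (2:ℤ) ^ k * (q i + if decide (t i = q i + 1) = true then 1 else 0)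
                + ((2^k : ℕ) : ℤ)
            rw [hb, hcast]; exact hb4
      have hCmass : ∀ ε, DFrost.mass 𝔸 w (C ε) ≤ H k := by
        intro ε
        have hbase : DFrost.dbase k (fun i => 2^k * (q i + if ε i then 1 else 0))
            = fun i => 2^k * (q i + if ε i then 1 else 0) := by
          funext i
          simp only [DFrost.dbase]
          rw [Int.mul_ediv_cancel_left _ (DFrost.pow_pos' k).ne']
        have hCe : C ε = DFrost.DC k (fun i => 2^k * (q i + if ε i then 1 else 0)) := by
          show C ε = Cube (DFrost.dbase k _) (2^k)
          rw [hbase]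
        rw [hCe]
        exact DFrost.mass_DC_le 𝔸 H hkn _
      calc μ (VCube x (2^k)) ≤ μ (⋃ ε, C ε) := measure_mono hCsub
        _ ≤ ∑' ε : Fin d → Bool, μ (C ε) := measure_iUnion_le C
        _ = ∑ ε : Fin d → Bool, μ (C ε) := tsum_fintype _
        _ ≤ (Finset.univ : Finset (Fin d → Bool)).card • H k :=
            Finset.sum_le_card_nsmul _ _ _ (fun ε _ => by rw [hμapp]; exact hCmass ε)
        _ = (2^d : ℝ≥0∞) * H k := by
            rw [Finset.card_univ, Fintype.card_fun, Fintype.card_bool, Fintype.card_fin,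
              nsmul_eq_mul]
            norm_num
        _ ≤ ENNReal.ofReal (2^d * h ((2:ℝ)^k / 2^n)) := by
            rw [ENNReal.ofReal_mul (by positivity)]
            have : ENNReal.ofReal ((2:ℝ)^d) = (2:ℝ≥0∞)^d := by
              rw [ENNReal.ofReal_pow (by norm_num)]
              norm_num
            rw [this]
end
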